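/- arXiv:2006.06250 — 7 statements merged into one kernel-verified Lean document; each statement's English description precedes it below -/
import Mathlib

section
/- Let n ≥ 1, let G be a real symmetric positive definite n×n matrix and ξ an n×n complex symmetric matrix with the spectral radius of M := ξ·G·ξ̄·G strictly less than 1, and let S be the unique diagonalizable matrix with positive real eigenvalues satisfying S² = 𝟙 − M. Then the matrix S·G⁻¹ is Hermitian and positive definite. -/
open ComplexOrder

/-- A complex matrix is diagonalizable with all eigenvalues real and strictly positive. -/
def DiagonalizablePosReal {n : ℕ} (S : Matrix (Fin n) (Fin n) ℂ) : Prop :=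
  ∃ (Q : Matrix (Fin n) (Fin n) ℂ) (d : Fin n → ℝ),
    IsUnit Q.det ∧ (∀ i, 0 < d i) ∧
    S = Q * Matrix.diagonal (fun i => (d i : ℂ)) * Q⁻¹

/-!
Put `g = G` (as a complex matrix) and `r = √g`. Since `ξ` is symmetric, `ξᴴ = ξ̄`, so the matrix
`N = (rξr)(rξr)ᴴ` satisfies `N = r M r⁻¹`: it is Hermitian positive semidefinite with the
spectrum of `M`, hence `1 - N` is positive definite and has a positive definite square root `T`.
Then `r⁻¹ T r` is diagonalizable with positive eigenvalues and squares to `1 - M`, so it is `S`,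
and `S g⁻¹ = r⁻¹ T r⁻¹` is a congruence of `T`.
-/

open Matrix
open scoped MatrixOrder

namespace Matrix

variable {ι : Type*} [Fintype ι]

section CommRing

variable {R : Type*} [CommRing R]

theorem IsHermitian.mul_mul_conjTranspose_mul [StarRing R] {r ξ : Matrix ι ι R}
    (hr : r.IsHermitian) (hξ : ξ.IsSymm) :
    r * ξ * r * (r * ξ * r)ᴴ * r = r * (ξ * (r * r) * ξ.map (starRingEnd R) * (r * r)) := by
  have hξH : ξᴴ = ξ.map (starRingEnd R) := by
    ext i j
    simp [hξ.apply i j, starRingEnd_apply]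
  simp only [conjTranspose_mul, hr.eq, hξH, Matrix.mul_assoc]

variable [DecidableEq ι]

theorem conj_eq_conj_iff {P Q A B : Matrix ι ι R} (hP : IsUnit P.det) (hQ : IsUnit Q.det) :
    Q * A * Q⁻¹ = P * B * P⁻¹ ↔ P⁻¹ * Q * A = B * (P⁻¹ * Q) := by
  let _ := invertibleOfIsUnitDet P hP
  let _ := invertibleOfIsUnitDet Q hQ
  rw [mul_inv_eq_iff_eq_mul_of_invertible, Matrix.mul_assoc P B, Matrix.mul_assoc P,
    ← inv_mul_eq_iff_eq_mul_of_invertible]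
  simp only [Matrix.mul_assoc]

theorem conj_mul_conj {P A B : Matrix ι ι R} (hP : IsUnit P.det) :
    P * A * P⁻¹ * (P * B * P⁻¹) = P * (A * B) * P⁻¹ := by
  simp only [Matrix.mul_assoc, nonsing_inv_mul_cancel_left _ _ hP]

end CommRing

variable [DecidableEq ι]

theorem spectrum_nonsing_inv_mul_mul {K : Type*} [Field K] {A P : Matrix ι ι K}
    (hP : IsUnit P.det) : spectrum K (P⁻¹ * A * P) = spectrum K A := by
  lift P to (Matrix ι ι K)ˣ using (isUnit_iff_isUnit_det _).mpr hP
  rw [← coe_units_inv, spectrum.units_conjugate']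

theorem mul_diagonal_eq_diagonal_mul_of_sq {d e : ι → ℝ} (hd : ∀ i, 0 ≤ d i)
    (he : ∀ i, 0 ≤ e i) {C : Matrix ι ι ℂ}
    (h : C * diagonal (fun i => (d i : ℂ) ^ 2) = diagonal (fun i => (e i : ℂ) ^ 2) * C) :
    C * diagonal (fun i => (d i : ℂ)) = diagonal (fun i => (e i : ℂ)) * C := by
  ext i j
  have hij := congrFun (congrFun h i) j
  simp only [mul_diagonal, diagonal_mul] at hij ⊢
  rcases eq_or_ne (C i j) 0 with h0 | h0
  · simp [h0]
  · have : d j ^ 2 = e i ^ 2 := by exact_mod_cast mul_left_cancel₀ h0 (hij.trans (mul_comm _ _))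
    rw [(pow_left_inj₀ (hd j) (he i) two_ne_zero).mp this, mul_comm]

theorem PosDef.map_ofReal {G : Matrix ι ι ℝ} (hG : G.PosDef) : (G.map Complex.ofReal).PosDef := by
  obtain ⟨B, rfl⟩ := CStarAlgebra.nonneg_iff_eq_star_mul_self.mp hG.posSemidef.nonneg
  have hmap : (star B * B).map Complex.ofReal = (B.map Complex.ofReal)ᴴ * B.map Complex.ofReal := by
    ext i j
    simp [Matrix.mul_apply]
  have hmap_det : ((star B * B).map Complex.ofReal).det = ((star B * B).det : ℂ) :=
    (Complex.ofRealHom.map_det _).symm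
  rw [hmap, (posSemidef_conjTranspose_mul_self _).posDef_iff_det_ne_zero, ← hmap, hmap_det]
  exact_mod_cast hG.det_pos.ne'

theorem IsHermitian.posDef_one_sub {N : Matrix ι ι ℂ} (hN : N.IsHermitian)
    (hspec : ∀ μ ∈ spectrum ℂ N, ‖μ‖ < 1) : (1 - N).PosDef := by
  rw [← isStrictlyPositive_iff_posDef,
    StarOrderedRing.isStrictlyPositive_iff_spectrum_pos (R := ℝ) _ ((IsSelfAdjoint.one _).sub hN),
    ← map_one (algebraMap ℝ (Matrix ι ι ℂ)), ← spectrum.singleton_sub_eq]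
  rintro _ ⟨_, rfl, x, hx, rfl⟩
  have hx_lt := hspec x (spectrum.algebraMap_mem ℂ hx)
  rw [Complex.norm_real] at hx_lt
  exact sub_pos.mpr ((le_abs_self x).trans_lt hx_lt)

end Matrix

namespace DiagonalizablePosReal

variable {n : ℕ}

theorem eq_of_mul_self_eq {X Y : Matrix (Fin n) (Fin n) ℂ}
    (hX : DiagonalizablePosReal X) (hY : DiagonalizablePosReal Y) (h : X * X = Y * Y) :
    X = Y := by
  obtain ⟨Q, d, hQ, hd, rfl⟩ := hX
  obtain ⟨P, e, hP, he, rfl⟩ := hY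
  have diagonal_sq (f : Fin n → ℝ) :
      diagonal (fun i => (f i : ℂ)) * diagonal (fun i => (f i : ℂ))
        = diagonal (fun i => (f i : ℂ) ^ 2) := by
    simp only [diagonal_mul_diagonal, sq]
  rw [conj_mul_conj hQ, conj_mul_conj hP, diagonal_sq, diagonal_sq, conj_eq_conj_iff hP hQ] at h
  rw [conj_eq_conj_iff hP hQ]
  exact mul_diagonal_eq_diagonal_mul_of_sq (fun i => (hd i).le) (fun i => (he i).le) h

theorem conj {X P : Matrix (Fin n) (Fin n) ℂ} (hX : DiagonalizablePosReal X)
    (hP : IsUnit P.det) : DiagonalizablePosReal (P⁻¹ * X * P) := by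
  obtain ⟨Q, d, hQ, hd, rfl⟩ := hX
  refine ⟨P⁻¹ * Q, d, ?_, hd, ?_⟩
  · rw [det_mul]
    exact (isUnit_nonsing_inv_det P hP).mul hQ
  · rw [Matrix.mul_inv_rev, nonsing_inv_nonsing_inv P hP]
    simp only [Matrix.mul_assoc]

end DiagonalizablePosReal

theorem Matrix.PosDef.diagonalizablePosReal {n : ℕ} {T : Matrix (Fin n) (Fin n) ℂ}
    (hT : T.PosDef) : DiagonalizablePosReal T := by
  refine ⟨hT.1.eigenvectorUnitary, hT.1.eigenvalues, ?_, hT.eigenvalues_pos, ?_⟩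
  · exact (isUnit_iff_isUnit_det _).mp (Unitary.isUnit_coe ..)
  · rw [inv_eq_left_inv (Unitary.coe_star_mul_self _)]
    exact hT.1.spectral_theorem

theorem statement2_general (n : ℕ)
    (G : Matrix (Fin n) (Fin n) ℝ) (hGpd : G.PosDef)
    (ξ : Matrix (Fin n) (Fin n) ℂ) (hξsym : ξ.IsSymm)
    (M : Matrix (Fin n) (Fin n) ℂ)
    (hM : M = ξ * G.map Complex.ofReal * ξ.map (starRingEnd ℂ) * G.map Complex.ofReal)
    (hspec : ∀ μ ∈ spectrum ℂ M, ‖μ‖ < 1)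
    (S : Matrix (Fin n) (Fin n) ℂ)
    (hSsq : S * S = 1 - M) (hSdiag : DiagonalizablePosReal S) :
    (S * (G.map Complex.ofReal)⁻¹).PosDef := by
  set g := G.map Complex.ofReal
  have hg : g.PosDef := hGpd.map_ofReal
  set r := CFC.sqrt g
  have hr : r.PosDef := (hg.isStrictlyPositive.sqrt).posDef
  have hr_det : IsUnit r.det := (isUnit_iff_isUnit_det r).mp hr.isUnit
  have hrr : r * r = g := CFC.sqrt_mul_sqrt_self g hg.posSemidef.nonneg
  set N := r * ξ * r * (r * ξ * r)ᴴ
  have hMN : M = r⁻¹ * N * r := by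
    rw [hM, ← hrr, Matrix.mul_assoc r⁻¹, hr.1.mul_mul_conjTranspose_mul hξsym,
      nonsing_inv_mul_cancel_left _ _ hr_det]
  have hN : (1 - N).PosDef := (isHermitian_mul_conjTranspose_self _).posDef_one_sub
    (by rwa [hMN, spectrum_nonsing_inv_mul_mul hr_det] at hspec)
  set T := CFC.sqrt (1 - N)
  have hT : T.PosDef := (hN.isStrictlyPositive.sqrt).posDef
  have hS : S = r⁻¹ * T * r := by
    refine hSdiag.eq_of_mul_self_eq (hT.diagonalizablePosReal.conj hr_det) ?_
    have hTT : T * T = 1 - N := CFC.sqrt_mul_sqrt_self _ hN.posSemidef.nonneg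
    rw [hSsq, hMN]
    simp only [Matrix.mul_assoc, mul_nonsing_inv_cancel_left _ _ hr_det]
    rw [← Matrix.mul_assoc T, hTT, Matrix.sub_mul, Matrix.mul_sub, Matrix.one_mul,
      nonsing_inv_mul _ hr_det]
  have hSg : S * g⁻¹ = (r⁻¹)ᴴ * T * r⁻¹ := by
    rw [hS, ← hrr, Matrix.mul_inv_rev, ← Matrix.mul_assoc,
      mul_nonsing_inv_cancel_right _ _ hr_det, hr.1.inv.eq]
  rw [hSg]
  exact hT.conjTranspose_mul_mul_same (mulVec_injective_of_isUnit hr.inv.isUnit)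

/-- with `M = ξ·G·ξ̄·G` of spectral radius `< 1` and `S` the unique
diagonalizable matrix with positive real eigenvalues satisfying `S² = 𝟙 − M`, the matrix
`S·G⁻¹` is Hermitian and positive definite. -/
theorem statement2 (n : ℕ) (hn : 1 ≤ n)
    (G : Matrix (Fin n) (Fin n) ℝ) (hGsym : G.IsSymm) (hGpd : G.PosDef)
    (ξ : Matrix (Fin n) (Fin n) ℂ) (hξsym : ξ.IsSymm)
    (M : Matrix (Fin n) (Fin n) ℂ)
    (hM : M = ξ * G.map Complex.ofReal * ξ.map (starRingEnd ℂ) * G.map Complex.ofReal)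
    (hspec : ∀ μ ∈ spectrum ℂ M, ‖μ‖ < 1)
    (S : Matrix (Fin n) (Fin n) ℂ)
    (hSsq : S * S = 1 - M) (hSdiag : DiagonalizablePosReal S) :
    (S * (G.map Complex.ofReal)⁻¹).PosDef :=
  statement2_general n G hGpd ξ hξsym M hM hspec S hSsq hSdiag
end

section
/- Let n ≥ 1 and let ξ be an n×n complex symmetric matrix whose real part Re(ξ) is positive semidefinite or negative semidefinite and whose imaginary part Im(ξ) is positive semidefinite or negative semidefinite. Then for every real symmetric n×n matrix H, the trace Tr(ξ·H·ξ̄·H) is a real number and satisfies Tr(ξ·H·ξ̄·H) ≥ 0. -/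
/-!
Write `ξ = A + iB` with `A = Re ξ`, `B = Im ξ` real symmetric, so that `ξ̄ = A - iB`. Expanding,
`Tr(ξHξ̄H) = Tr(AHAH) + Tr(BHBH)`: the two cross terms `Tr(AHBH)` and `Tr(BHAH)` cancel by
cyclicity of the trace. Each remaining term is nonnegative: replacing `A` by `-A` if needed,
`A = CᴴC` is positive semidefinite, and cyclicity turns `Tr(AHAH)` into `Tr(MᴴM) ≥ 0` with
`M = CHCᴴ` Hermitian.
-/

open Matrix

namespace Matrix

open scoped ComplexOrder

section ReIm

variable {m n : Type*}

theorem map_re_add_I_smul_map_im (ξ : Matrix m n ℂ) :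
    (ξ.map Complex.re).map Complex.ofReal + Complex.I • (ξ.map Complex.im).map Complex.ofReal =
      ξ := by
  ext i j
  simp [mul_comm Complex.I, Complex.re_add_im]

theorem map_re_sub_I_smul_map_im (ξ : Matrix m n ℂ) :
    (ξ.map Complex.re).map Complex.ofReal - Complex.I • (ξ.map Complex.im).map Complex.ofReal =
      ξ.map (starRingEnd ℂ) := by
  ext i j
  apply Complex.ext <;> simp

end ReIm

variable {n : Type*} [Fintype n]

theorem trace_map_ofReal (A : Matrix n n ℝ) : trace (A.map Complex.ofReal) = ((trace A : ℝ) : ℂ) :=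
  (AddMonoidHom.map_trace Complex.ofRealHom A).symm

theorem trace_add_smul_mul_mul_sub_smul_mul {R : Type*} [CommRing R] (c : R)
    (X Y H : Matrix n n R) :
    trace ((X + c • Y) * H * (X - c • Y) * H) =
      trace (X * H * X * H) - c ^ 2 * trace (Y * H * Y * H) := by
  have cross : trace (Y * H * X * H) = trace (X * H * Y * H) := by
    rw [Matrix.mul_assoc, trace_mul_comm, ← Matrix.mul_assoc]
  simp only [add_mul, sub_mul, mul_sub, Matrix.smul_mul, Matrix.mul_smul, trace_add, trace_sub,
    trace_smul, cross, smul_eq_mul]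
  ring

theorem trace_mul_map_ofReal_mul_map_conj_mul_map_ofReal (ξ : Matrix n n ℂ)
    (H : Matrix n n ℝ) :
    trace (ξ * H.map Complex.ofReal * ξ.map (starRingEnd ℂ) * H.map Complex.ofReal) =
      ((trace (ξ.map Complex.re * H * ξ.map Complex.re * H) +
        trace (ξ.map Complex.im * H * ξ.map Complex.im * H) : ℝ) : ℂ) := by
  have hξ := map_re_add_I_smul_map_im ξ
  have hξbar := map_re_sub_I_smul_map_im ξ
  set A := ξ.map Complex.re
  set B := ξ.map Complex.im
  rw [← hξbar, ← hξ, trace_add_smul_mul_mul_sub_smul_mul, Complex.I_sq]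
  have map_ofReal_mul (M N : Matrix n n ℝ) :
      M.map Complex.ofReal * N.map Complex.ofReal = (M * N).map Complex.ofReal :=
    (Matrix.map_mul (f := Complex.ofRealHom)).symm
  simp only [map_ofReal_mul, trace_map_ofReal]
  push_cast
  ring

open scoped MatrixOrder in
theorem PosSemidef.trace_mul_mul_mul_nonneg {𝕜 : Type*} [RCLike 𝕜] {A H : Matrix n n 𝕜}
    (hA : A.PosSemidef) (hH : H.IsHermitian) : 0 ≤ trace (A * H * A * H) := by
  classical
  obtain ⟨C, rfl⟩ := CStarAlgebra.nonneg_iff_eq_star_mul_self.mp hA.nonneg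
  rw [star_eq_conjTranspose]
  have hM : (C * H * Cᴴ)ᴴ = C * H * Cᴴ := by
    simp [conjTranspose_mul, hH.eq, Matrix.mul_assoc]
  calc 0 ≤ trace ((C * H * Cᴴ)ᴴ * (C * H * Cᴴ)) :=
        (posSemidef_conjTranspose_mul_self _).trace_nonneg
    _ = trace ((C * H * Cᴴ * C * H) * Cᴴ) := by rw [hM]; noncomm_ring
    _ = trace (Cᴴ * C * H * (Cᴴ * C) * H) := by rw [trace_mul_comm]; noncomm_ring

theorem trace_mul_mul_mul_nonneg_of_posSemidef_or {𝕜 : Type*} [RCLike 𝕜] {A H : Matrix n n 𝕜}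
    (hA : A.PosSemidef ∨ (-A).PosSemidef) (hH : H.IsHermitian) :
    0 ≤ trace (A * H * A * H) := by
  rcases hA with hA | hA
  · exact hA.trace_mul_mul_mul_nonneg hH
  · simpa using hA.trace_mul_mul_mul_nonneg hH

theorem posSemidef_or_neg_of_isSymm {A : Matrix n n ℝ} (hA : A.IsSymm)
    (h : (∀ v : n → ℝ, 0 ≤ v ⬝ᵥ A *ᵥ v) ∨ (∀ v : n → ℝ, v ⬝ᵥ A *ᵥ v ≤ 0)) :
    A.PosSemidef ∨ (-A).PosSemidef := by
  have hA' : A.IsHermitian := isHermitian_iff_isSymm.mpr hA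
  refine h.imp (fun h => .of_dotProduct_mulVec_nonneg hA' (by simpa using h))
    (fun h => .of_dotProduct_mulVec_nonneg hA'.neg fun v => ?_)
  simpa [neg_mulVec] using h v

end Matrix

theorem statement3_general (n : ℕ)
    (ξ : Matrix (Fin n) (Fin n) ℂ) (hξsym : ξ.IsSymm)
    (hRe : (∀ v : Fin n → ℝ, 0 ≤ dotProduct v ((ξ.map Complex.re).mulVec v)) ∨
           (∀ v : Fin n → ℝ, dotProduct v ((ξ.map Complex.re).mulVec v) ≤ 0))
    (hIm : (∀ v : Fin n → ℝ, 0 ≤ dotProduct v ((ξ.map Complex.im).mulVec v)) ∨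
           (∀ v : Fin n → ℝ, dotProduct v ((ξ.map Complex.im).mulVec v) ≤ 0))
    (H : Matrix (Fin n) (Fin n) ℝ) (hHsym : H.IsSymm) :
    (Matrix.trace
        (ξ * H.map Complex.ofReal * ξ.map (starRingEnd ℂ) * H.map Complex.ofReal)).im = 0 ∧
    0 ≤ (Matrix.trace
        (ξ * H.map Complex.ofReal * ξ.map (starRingEnd ℂ) * H.map Complex.ofReal)).re := by
  have hH : H.IsHermitian := isHermitian_iff_isSymm.mpr hHsym
  have hA := trace_mul_mul_mul_nonneg_of_posSemidef_or
    (posSemidef_or_neg_of_isSymm (hξsym.map Complex.re) hRe) hH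
  have hB := trace_mul_mul_mul_nonneg_of_posSemidef_or
    (posSemidef_or_neg_of_isSymm (hξsym.map Complex.im) hIm) hH
  rw [trace_mul_map_ofReal_mul_map_conj_mul_map_ofReal]
  exact ⟨Complex.ofReal_im _, by simpa using add_nonneg hA hB⟩

/-- if `ξ` is complex symmetric with `Re ξ` and `Im ξ` each positive or
negative semidefinite, then for every real symmetric `H`, `Tr(ξ·H·ξ̄·H)` is real and
nonnegative. -/
theorem statement3 (n : ℕ) (hn : 1 ≤ n)
    (ξ : Matrix (Fin n) (Fin n) ℂ) (hξsym : ξ.IsSymm)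
    (hRe : (∀ v : Fin n → ℝ, 0 ≤ dotProduct v ((ξ.map Complex.re).mulVec v)) ∨
           (∀ v : Fin n → ℝ, dotProduct v ((ξ.map Complex.re).mulVec v) ≤ 0))
    (hIm : (∀ v : Fin n → ℝ, 0 ≤ dotProduct v ((ξ.map Complex.im).mulVec v)) ∨
           (∀ v : Fin n → ℝ, dotProduct v ((ξ.map Complex.im).mulVec v) ≤ 0))
    (H : Matrix (Fin n) (Fin n) ℝ) (hHsym : H.IsSymm) :
    (Matrix.trace
        (ξ * H.map Complex.ofReal * ξ.map (starRingEnd ℂ) * H.map Complex.ofReal)).im = 0 ∧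
    0 ≤ (Matrix.trace
        (ξ * H.map Complex.ofReal * ξ.map (starRingEnd ℂ) * H.map Complex.ofReal)).re :=
  statement3_general n ξ hξsym hRe hIm H hHsym
end

section
/- Let n ≥ 1 and let ξ be an n×n complex symmetric matrix whose real part Re(ξ) is positive semidefinite or negative semidefinite and whose imaginary part Im(ξ) is positive semidefinite or negative semidefinite. Then the set { G : G is a real symmetric positive definite n×n matrix and Tr(ξ·G·ξ̄·G) < 1 } is a convex subset of the real vector space of symmetric n×n matrices. (Here Tr(ξ·G·ξ̄·G) is a real number.) -/
/-!
Write `ξ = R + i S` with `R`, `S` real symmetric. Since `re (z * conj w) = re z * re w + im z * im w`,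
`re Tr(ξ G ξ̄ G) = Tr(R G R G) + Tr(S G S G)`. Each `G ↦ Tr(R G R G)` is a quadratic form, and it is
nonnegative on symmetric `G` when `±R = Bᵀ B` is semidefinite, because then
`Tr(R G R G) = Tr(Mᵀ M)` with `M = B G Bᵀ` symmetric. A real quadratic form that is nonnegative on
differences of points of a convex set is convex on it, so its strict sublevel sets inside the convex
cone of positive definite matrices are convex.
-/

theorem QuadraticMap.convexOn_of_nonneg_sub {E : Type*} [AddCommGroup E] [Module ℝ E]
    (Q : QuadraticForm ℝ E) {s : Set E} (hs : Convex ℝ s)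
    (hQ : ∀ x ∈ s, ∀ y ∈ s, 0 ≤ Q (x - y)) : ConvexOn ℝ s Q := by
  refine ⟨hs, fun x hx y hy a b ha hb hab => ?_⟩
  have hsplit : Q (a • x + b • y) = a * Q x + b * Q y - a * b * Q (x - y) := by
    rw [QuadraticMap.map_add Q, QuadraticMap.map_smul, QuadraticMap.map_smul, sub_eq_add_neg x y,
      QuadraticMap.map_add Q, QuadraticMap.map_neg, QuadraticMap.polar_smul_left,
      QuadraticMap.polar_smul_right, QuadraticMap.polar_neg_right]
    simp only [smul_eq_mul]
    linear_combination (a * Q x + b * Q y) * hab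
  rw [hsplit, smul_eq_mul, smul_eq_mul]
  exact sub_le_self _ (mul_nonneg (mul_nonneg ha hb) (hQ x hx y hy))

namespace Matrix

theorem convex_setOf_posDef {ι : Type*} : Convex ℝ {G : Matrix ι ι ℝ | G.PosDef} :=
  convex_iff_forall_pos.mpr fun _ hG _ hH _ _ ha hb _ => (hG.smul ha).add (hH.smul hb)

variable {ι : Type*} [Fintype ι]

def traceSqForm (R : Matrix ι ι ℝ) : QuadraticForm ℝ (Matrix ι ι ℝ) :=
  LinearMap.BilinMap.toQuadraticMap <| LinearMap.mk₂ ℝ (fun G H => (R * G * R * H).trace)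
    (fun _ _ _ => by simp only [mul_add, add_mul, trace_add])
    (fun _ _ _ => by simp only [mul_smul_comm, smul_mul_assoc, trace_smul])
    (fun _ _ _ => by simp only [mul_add, trace_add])
    (fun _ _ _ => by simp only [mul_smul_comm, trace_smul])

@[simp]
theorem traceSqForm_apply (R G : Matrix ι ι ℝ) : traceSqForm R G = (R * G * R * G).trace := rfl

@[simp]
theorem traceSqForm_neg (R : Matrix ι ι ℝ) : traceSqForm (-R) = traceSqForm R := by
  ext G
  simp

theorem re_trace_mul_map_conj_mul (ξ : Matrix ι ι ℂ) (G : Matrix ι ι ℝ) :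
    (trace (ξ * G.map Complex.ofReal * ξ.map (starRingEnd ℂ) * G.map Complex.ofReal)).re
      = traceSqForm (ξ.map Complex.re) G + traceSqForm (ξ.map Complex.im) G := by
  simp only [traceSqForm_apply, trace, diag, mul_apply, map_apply, Complex.re_sum, Finset.sum_mul,
    ← Finset.sum_add_distrib]
  simp [Complex.mul_re, Complex.mul_im, add_mul]

theorem posSemidef_or_neg_posSemidef_of_isSymm {R : Matrix ι ι ℝ} (hR : R.IsSymm)
    (h : (∀ v : ι → ℝ, 0 ≤ v ⬝ᵥ R *ᵥ v) ∨ ∀ v : ι → ℝ, v ⬝ᵥ R *ᵥ v ≤ 0) :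
    R.PosSemidef ∨ (-R).PosSemidef := by
  have hR' : R.IsHermitian := isHermitian_iff_isSymm.mpr hR
  refine h.imp (fun h => .of_dotProduct_mulVec_nonneg hR' fun v => ?_)
    (fun h => .of_dotProduct_mulVec_nonneg hR'.neg fun v => ?_)
  · simpa using h v
  · simpa [neg_mulVec] using neg_nonneg.mpr (h v)

variable [DecidableEq ι]

open scoped MatrixOrder in
theorem PosSemidef.traceSqForm_nonneg {R : Matrix ι ι ℝ} (hR : R.PosSemidef) {G : Matrix ι ι ℝ}
    (hG : G.IsHermitian) : 0 ≤ traceSqForm R G := by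
  obtain ⟨B, rfl⟩ := CStarAlgebra.nonneg_iff_eq_star_mul_self.mp hR.nonneg
  have hM : (B * G * Bᴴ)ᴴ = B * G * Bᴴ := by
    rw [conjTranspose_mul, conjTranspose_mul, conjTranspose_conjTranspose, hG.eq, mul_assoc]
  calc 0 ≤ ((B * G * Bᴴ)ᴴ * (B * G * Bᴴ)).trace :=
        (posSemidef_conjTranspose_mul_self _).trace_nonneg
    _ = (B * G * Bᴴ * B * G * Bᴴ).trace := by rw [hM]; simp only [mul_assoc]
    _ = (Bᴴ * (B * G * Bᴴ * B * G)).trace := trace_mul_comm _ _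
    _ = traceSqForm (star B * B) G := by
        simp only [traceSqForm_apply, star_eq_conjTranspose, mul_assoc]

theorem traceSqForm_nonneg {R : Matrix ι ι ℝ} (hR : R.PosSemidef ∨ (-R).PosSemidef)
    {G : Matrix ι ι ℝ} (hG : G.IsHermitian) : 0 ≤ traceSqForm R G := by
  rcases hR with hR | hR
  · exact hR.traceSqForm_nonneg hG
  · simpa using hR.traceSqForm_nonneg hG

end Matrix

open Matrix

theorem statement4_general (n : ℕ)
    (ξ : Matrix (Fin n) (Fin n) ℂ) (hξsym : ξ.IsSymm)
    (hRe : (∀ v : Fin n → ℝ, 0 ≤ dotProduct v ((ξ.map Complex.re).mulVec v)) ∨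
           (∀ v : Fin n → ℝ, dotProduct v ((ξ.map Complex.re).mulVec v) ≤ 0))
    (hIm : (∀ v : Fin n → ℝ, 0 ≤ dotProduct v ((ξ.map Complex.im).mulVec v)) ∨
           (∀ v : Fin n → ℝ, dotProduct v ((ξ.map Complex.im).mulVec v) ≤ 0)) :
    Convex ℝ {G : Matrix (Fin n) (Fin n) ℝ | G.IsSymm ∧ G.PosDef ∧
      (Matrix.trace
        (ξ * G.map Complex.ofReal * ξ.map (starRingEnd ℂ) * G.map Complex.ofReal)).re < 1} := by
  have hRe' := posSemidef_or_neg_posSemidef_of_isSymm (hξsym.map Complex.re) hRe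
  have hIm' := posSemidef_or_neg_posSemidef_of_isSymm (hξsym.map Complex.im) hIm
  have hconvex : ConvexOn ℝ {G | G.PosDef}
      (traceSqForm (ξ.map Complex.re) + traceSqForm (ξ.map Complex.im)) :=
    (traceSqForm _ + traceSqForm _).convexOn_of_nonneg_sub convex_setOf_posDef
      fun G hG H hH => add_nonneg (traceSqForm_nonneg hRe' (hG.isHermitian.sub hH.isHermitian))
        (traceSqForm_nonneg hIm' (hG.isHermitian.sub hH.isHermitian))
  refine Eq.subst (motive := Convex ℝ) (Set.ext fun G => ?_) (hconvex.convex_lt 1)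
  simp only [Set.mem_ofPred_eq, re_trace_mul_map_conj_mul, _root_.add_apply]
  exact ⟨fun ⟨hG, hlt⟩ => ⟨isHermitian_iff_isSymm.mp hG.isHermitian, hG, hlt⟩,
    fun ⟨_, hG, hlt⟩ => ⟨hG, hlt⟩⟩

/-- if `ξ` is complex symmetric with `Re ξ` and `Im ξ` each positive or
negative semidefinite, the set of real symmetric positive definite matrices `G` with
`Tr(ξ·G·ξ̄·G) < 1` is convex. -/
theorem statement4 (n : ℕ) (hn : 1 ≤ n)
    (ξ : Matrix (Fin n) (Fin n) ℂ) (hξsym : ξ.IsSymm)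
    (hRe : (∀ v : Fin n → ℝ, 0 ≤ dotProduct v ((ξ.map Complex.re).mulVec v)) ∨
           (∀ v : Fin n → ℝ, dotProduct v ((ξ.map Complex.re).mulVec v) ≤ 0))
    (hIm : (∀ v : Fin n → ℝ, 0 ≤ dotProduct v ((ξ.map Complex.im).mulVec v)) ∨
           (∀ v : Fin n → ℝ, dotProduct v ((ξ.map Complex.im).mulVec v) ≤ 0)) :
    Convex ℝ {G : Matrix (Fin n) (Fin n) ℝ | G.IsSymm ∧ G.PosDef ∧
      (Matrix.trace
        (ξ * G.map Complex.ofReal * ξ.map (starRingEnd ℂ) * G.map Complex.ofReal)).re < 1} :=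
  statement4_general n ξ hξsym hRe hIm
end

section
/- Let ξ be a 2×2 complex symmetric matrix with det(ξ) = 0. Then for every real symmetric 2×2 matrix H, the trace Tr(ξ·H·ξ̄·H) is a real number and satisfies Tr(ξ·H·ξ̄·H) ≥ 0. -/
/-!
Over an algebraically closed field a symmetric `2×2` matrix of determinant zero is `v vᵀ`:
take square roots of the diagonal entries and fix the sign of one of them. For `ξ = v vᵀ` and
a symmetric `K`, `Tr(ξ K ξ̄ K) = (vᵀ K v̄)²`, and when `K` is real the scalar `vᵀ K v̄ = w* K w`
(with `w = v̄`) is a value of a Hermitian form, hence real.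
-/

open Matrix

theorem Matrix.exists_eq_vecMulVec_self_of_isSymm_of_det_eq_zero {K : Type*} [Field K]
    [IsAlgClosed K] {ξ : Matrix (Fin 2) (Fin 2) K} (hsym : ξ.IsSymm) (hdet : ξ.det = 0) :
    ∃ v : Fin 2 → K, ξ = vecMulVec v v := by
  obtain ⟨α, hα⟩ := IsAlgClosed.exists_eq_mul_self (ξ 0 0)
  obtain ⟨γ, hγ⟩ := IsAlgClosed.exists_eq_mul_self (ξ 1 1)
  have h10 : ξ 1 0 = ξ 0 1 := hsym.apply 0 1
  have hsq : (α * γ) * (α * γ) = ξ 0 1 * ξ 0 1 := by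
    rw [det_fin_two, h10, hα, hγ, sub_eq_zero] at hdet
    linear_combination hdet
  rcases mul_self_eq_mul_self_iff.mp hsq with h | h
  · refine ⟨![α, γ], ?_⟩
    ext i j
    fin_cases i <;> fin_cases j <;> simp [vecMulVec_apply, hα, hγ, h10] <;> grind
  · refine ⟨![α, -γ], ?_⟩
    ext i j
    fin_cases i <;> fin_cases j <;> simp [vecMulVec_apply, hα, hγ, h10] <;> grind

theorem Matrix.trace_vecMulVec_mul_mul_vecMulVec_mul {R n : Type*} [CommSemiring R] [Fintype n]
    (v w : n → R) {A : Matrix n n R} (hA : A.IsSymm) :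
    trace (vecMulVec v v * A * vecMulVec w w * A) = (v ⬝ᵥ A *ᵥ w) ^ 2 := by
  rw [vecMulVec_mul, vecMulVec_mul_vecMulVec, vecMulVec_mul, trace_vecMulVec, smul_vecMul,
    dotProduct_smul, ← dotProduct_mulVec, smul_eq_mul, sq, ← vecMul_transpose, hA.eq]

/-- if `ξ` is a `2×2` complex symmetric matrix with `det ξ = 0`, then for
every real symmetric `2×2` matrix `H`, `Tr(ξ·H·ξ̄·H)` is real and nonnegative. -/
theorem statement5 (ξ : Matrix (Fin 2) (Fin 2) ℂ) (hξsym : ξ.IsSymm) (hξdet : ξ.det = 0)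
    (H : Matrix (Fin 2) (Fin 2) ℝ) (hHsym : H.IsSymm) :
    (Matrix.trace
        (ξ * H.map Complex.ofReal * ξ.map (starRingEnd ℂ) * H.map Complex.ofReal)).im = 0 ∧
    0 ≤ (Matrix.trace
        (ξ * H.map Complex.ofReal * ξ.map (starRingEnd ℂ) * H.map Complex.ofReal)).re := by
  obtain ⟨v, rfl⟩ := exists_eq_vecMulVec_self_of_isSymm_of_det_eq_zero hξsym hξdet
  set K := H.map Complex.ofReal
  have hKsym : K.IsSymm := hHsym.map _
  have hKherm : K.IsHermitian :=
    (isHermitian_iff_isSymm.mpr hHsym).map _ fun x => (Complex.conj_ofReal x).symm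
  have hconj : (vecMulVec v v).map (starRingEnd ℂ) = vecMulVec (star v) (star v) := by
    ext; simp [vecMulVec_apply]
  have hreal : v ⬝ᵥ K *ᵥ star v = ((v ⬝ᵥ K *ᵥ star v).re : ℂ) := by
    refine Complex.ext rfl ?_
    simpa using hKherm.im_star_dotProduct_mulVec_self (star v)
  rw [hconj, trace_vecMulVec_mul_mul_vecMulVec_mul _ _ hKsym, hreal, ← Complex.ofReal_pow,
    Complex.ofReal_im, Complex.ofReal_re]
  exact ⟨rfl, sq_nonneg _⟩
end

section
/- Let ξ : ℝ² → Sym₂(ℂ) be a smooth ℤ²-periodic map depending only on the first coordinate y¹, satisfying ∑_{a,b} ∂²ξ^{ab}/∂y^a∂y^b = 0 and det ξ(y) = 0 for all y. Then the entry ξ¹¹ is a constant c ∈ ℂ, and: if c = 0 then ξ¹² is identically zero (so ξ is diagonal with only the entry ξ²² possibly nonzero); if c ≠ 0 then ξ²²(y) = (ξ¹²(y))²/c for all y. -/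
/-- The partial derivative `∂_c f` of a complex-valued function on `ℝⁿ`. -/
noncomputable def pderivC (n : ℕ) (c : Fin n) (f : (Fin n → ℝ) → ℂ) (y : Fin n → ℝ) : ℂ :=
  fderiv ℝ f y (Pi.single c 1)

noncomputable def emb : ℝ →L[ℝ] (Fin 2 → ℝ) :=
  LinearMap.toContinuousLinearMap (LinearMap.single ℝ (fun _ : Fin 2 => ℝ) 0)

lemma gsmooth (f : (Fin 2 → ℝ) → ℂ) (hf : ContDiff ℝ (⊤ : ℕ∞) f) :
    ContDiff ℝ (⊤ : ℕ∞) (fun t => f (Pi.single 0 t)) := by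
  have : (fun t => f (Pi.single 0 t)) = f ∘ emb := rfl
  rw [this]
  exact hf.comp emb.contDiff

lemma pderiv_dep (f : (Fin 2 → ℝ) → ℂ) (hf : ContDiff ℝ (⊤ : ℕ∞) f)
    (hdep : ∀ y y' : Fin 2 → ℝ, y 0 = y' 0 → f y = f y') (b : Fin 2) (y : Fin 2 → ℝ) :
    pderivC 2 b f y = (Pi.single b 1 : Fin 2 → ℝ) 0 • deriv (fun t => f (Pi.single 0 t)) (y 0) := by
  set g := fun t => f (Pi.single 0 t) with hg
  have hgc : ContDiff ℝ (⊤ : ℕ∞) g := gsmooth f hf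
  have hfeq : f = g ∘ (ContinuousLinearMap.proj (R := ℝ) (φ := fun _ : Fin 2 => ℝ) 0) := by
    funext y
    exact hdep y (Pi.single 0 (y 0)) (by simp)
  have hD : HasFDerivAt f ((ContinuousLinearMap.smulRight (1 : ℝ →L[ℝ] ℝ) (deriv g (y 0))).comp
      (ContinuousLinearMap.proj (R := ℝ) (φ := fun _ : Fin 2 => ℝ) 0)) y := by
    rw [hfeq]
    exact ((hgc.differentiable (by norm_num) (y 0)).hasDerivAt.hasFDerivAt).comp y
      (ContinuousLinearMap.hasFDerivAt (ContinuousLinearMap.proj (R := ℝ) (φ := fun _ : Fin 2 => ℝ) 0))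
  rw [pderivC, hD.fderiv]
  simp

lemma comp_smooth (u : ℝ → ℂ) (hu : ContDiff ℝ (⊤ : ℕ∞) u) :
    ContDiff ℝ (⊤ : ℕ∞) (fun z : Fin 2 → ℝ => u (z 0)) :=
  hu.comp (ContinuousLinearMap.proj (R := ℝ) (φ := fun _ : Fin 2 => ℝ) 0).contDiff

lemma comp_pderiv (u : ℝ → ℂ) (hu : ContDiff ℝ (⊤ : ℕ∞) u) (b : Fin 2) (y : Fin 2 → ℝ) :
    pderivC 2 b (fun z : Fin 2 → ℝ => u (z 0)) y
      = (Pi.single b 1 : Fin 2 → ℝ) 0 • deriv u (y 0) := by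
  have := pderiv_dep (fun z : Fin 2 → ℝ => u (z 0)) (comp_smooth u hu)
    (fun y y' h => by simp [h]) b y
  simpa using this

/-- classification of `ℤ²`-periodic, rank-degenerate solutions of the
complex moment map equation depending only on the first coordinate. -/
theorem statement10 (ξ : (Fin 2 → ℝ) → Matrix (Fin 2) (Fin 2) ℂ)
    (hξsmooth : ∀ a b, ContDiff ℝ (⊤ : ℕ∞) fun y => ξ y a b)
    (hξper : ∀ (y : Fin 2 → ℝ) (k : Fin 2 → ℤ), ξ (y + fun i => (k i : ℝ)) = ξ y)
    (hξsym : ∀ y, (ξ y).IsSymm)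
    (hdep : ∀ y y' : Fin 2 → ℝ, y 0 = y' 0 → ξ y = ξ y')
    (hdiv : ∀ y, ∑ a, ∑ b, pderivC 2 a (fun z => pderivC 2 b (fun w => ξ w a b) z) y = 0)
    (hdet : ∀ y, (ξ y).det = 0) :
    ∃ c : ℂ, (∀ y, ξ y 0 0 = c) ∧
      (c = 0 → ∀ y, ξ y 0 1 = 0) ∧
      (c ≠ 0 → ∀ y, ξ y 1 1 = (ξ y 0 1) ^ 2 / c) := by
  -- entrywise dependence
  have hdepE : ∀ (a b : Fin 2) (y y' : Fin 2 → ℝ), y 0 = y' 0 → ξ y a b = ξ y' a b :=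
    fun a b y y' h => by rw [hdep y y' h]
  set g00 : ℝ → ℂ := fun t => ξ (Pi.single 0 t) 0 0 with hg00def
  have hg00 : ContDiff ℝ (⊤ : ℕ∞) g00 := gsmooth _ ((hξsmooth 0 0).of_le (by simp))
  have hdg00 : ContDiff ℝ (⊤ : ℕ∞) (deriv g00) := (contDiff_infty_iff_deriv.mp hg00).2
  set g10 : ℝ → ℂ := fun t => ξ (Pi.single 0 t) 1 0 with hg10def
  have hg10 : ContDiff ℝ (⊤ : ℕ∞) g10 := gsmooth _ ((hξsmooth 1 0).of_le (by simp))
  have hdg10 : ContDiff ℝ (⊤ : ℕ∞) (deriv g10) := (contDiff_infty_iff_deriv.mp hg10).2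
  -- the divergence equation reduces to (g00)'' = 0
  have key : ∀ t : ℝ, deriv (deriv g00) t = 0 := by
    intro t
    have h := hdiv (Pi.single 0 t)
    rw [Fin.sum_univ_two] at h
    rw [Fin.sum_univ_two, Fin.sum_univ_two] at h
    -- term (0,0)
    have h00i : (fun z => pderivC 2 0 (fun w => ξ w 0 0) z)
        = fun z : Fin 2 → ℝ => deriv g00 (z 0) := by
      funext z
      have := pderiv_dep (fun w => ξ w 0 0) ((hξsmooth 0 0).of_le (by simp)) (hdepE 0 0) 0 z
      simpa using this
    have h00 : pderivC 2 0 (fun z => pderivC 2 0 (fun w => ξ w 0 0) z) (Pi.single 0 t)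
        = deriv (deriv g00) t := by
      rw [h00i]
      have := comp_pderiv (deriv g00) hdg00 0 (Pi.single 0 t)
      simpa using this
    -- term (0,1): inner derivative in direction 1 vanishes
    have h01i : (fun z => pderivC 2 1 (fun w => ξ w 0 1) z) = fun _ : Fin 2 → ℝ => (0 : ℂ) := by
      funext z
      have := pderiv_dep (fun w => ξ w 0 1) ((hξsmooth 0 1).of_le (by simp)) (hdepE 0 1) 1 z
      simpa using this
    have h01 : pderivC 2 0 (fun z => pderivC 2 1 (fun w => ξ w 0 1) z) (Pi.single 0 t) = 0 := by
      rw [h01i, pderivC]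
      simp
    -- term (1,0): outer derivative in direction 1 vanishes
    have h10i : (fun z => pderivC 2 0 (fun w => ξ w 1 0) z)
        = fun z : Fin 2 → ℝ => deriv g10 (z 0) := by
      funext z
      have := pderiv_dep (fun w => ξ w 1 0) ((hξsmooth 1 0).of_le (by simp)) (hdepE 1 0) 0 z
      simpa using this
    have h10 : pderivC 2 1 (fun z => pderivC 2 0 (fun w => ξ w 1 0) z) (Pi.single 0 t) = 0 := by
      rw [h10i]
      have := comp_pderiv (deriv g10) hdg10 1 (Pi.single 0 t)
      simpa using this
    -- term (1,1)
    have h11i : (fun z => pderivC 2 1 (fun w => ξ w 1 1) z) = fun _ : Fin 2 → ℝ => (0 : ℂ) := by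
      funext z
      have := pderiv_dep (fun w => ξ w 1 1) ((hξsmooth 1 1).of_le (by simp)) (hdepE 1 1) 1 z
      simpa using this
    have h11 : pderivC 2 1 (fun z => pderivC 2 1 (fun w => ξ w 1 1) z) (Pi.single 0 t) = 0 := by
      rw [h11i, pderivC]
      simp
    rw [h00, h01, h10, h11] at h
    simpa using h
  -- deriv g00 is constant
  have hdg00diff : Differentiable ℝ (deriv g00) := hdg00.differentiable (by norm_num)
  have hderivconst : ∀ t : ℝ, deriv g00 t = deriv g00 0 :=
    fun t => is_const_of_deriv_eq_zero hdg00diff key t 0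
  set k : ℂ := deriv g00 0 with hk
  -- periodicity of g00
  have hper : ∀ t : ℝ, g00 (t + 1) = g00 t := by
    intro t
    have hsingle : (Pi.single 0 (t + 1) : Fin 2 → ℝ)
        = Pi.single 0 t + fun i => (((Pi.single 0 1 : Fin 2 → ℤ)) i : ℝ) := by
      funext i
      fin_cases i <;> simp
    simp only [hg00def, hsingle, hξper]
  -- g00 t = g00 0 + t • k
  have haffine : ∀ t : ℝ, g00 t = g00 0 + t • k := by
    have hψdiff : Differentiable ℝ (fun t : ℝ => g00 t - t • k) := by
      exact (hg00.differentiable (by norm_num)).sub (differentiable_id.smul_const k)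
    have hψderiv : ∀ t : ℝ, deriv (fun t : ℝ => g00 t - t • k) t = 0 := by
      intro t
      have h1 : HasDerivAt g00 k t := by
        have := ((hg00.differentiable (by norm_num)) t).hasDerivAt
        rwa [hderivconst t] at this
      have h2 : HasDerivAt (fun t : ℝ => t • k) k t := by
        simpa using (hasDerivAt_id t).smul_const k
      have := (h1.sub h2).deriv
      exact this.trans (sub_self k)
    intro t
    have := is_const_of_deriv_eq_zero hψdiff hψderiv t 0
    simp only [zero_smul, sub_zero] at this
    linear_combination this
  -- periodicity forces k = 0
  have hk0 : k = 0 := by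
    have h1 := hper 0
    rw [haffine (0 + 1), haffine 0] at h1
    simpa using h1
  have hconst : ∀ t : ℝ, g00 t = g00 0 := by
    intro t; rw [haffine t, hk0]; simp
  refine ⟨g00 0, ?_, ?_, ?_⟩
  · intro y
    have := hdepE 0 0 y (Pi.single 0 (y 0)) (by simp)
    rw [this]
    exact hconst (y 0)
  all_goals {
    intro hc y
    have hd := hdet y
    rw [Matrix.det_fin_two] at hd
    have hsym : ξ y 1 0 = ξ y 0 1 := (hξsym y).apply 0 1
    have h00 : ξ y 0 0 = g00 0 := by
      rw [hdepE 0 0 y (Pi.single 0 (y 0)) (by simp)]; exact hconst (y 0)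
    first
    | · -- c = 0 case
        rw [h00, hc] at hd
        rw [hsym] at hd
        have : ξ y 0 1 ^ 2 = 0 := by linear_combination -hd
        exact pow_eq_zero_iff (n := 2) (by norm_num) |>.mp this
    | · -- c ≠ 0 case
        rw [h00] at hd
        rw [hsym] at hd
        field_simp
        linear_combination hd
  }
end

section
/- Let c ∈ ℂ with 0 < |c| < 3/10, and let F : ℝ → ℂ be a smooth 1-periodic function with |F(y)| ≤ |c| for all y. Then there exists a smooth 1-periodic function f : ℝ → ℝ, unique up to an additive constant, such that for all y: 1 + f''(y) > 0, p(y) := (1 + f''(y))·|c|² + |F(y)|² < |c|, and there exists a constant k ∈ ℝ with p(y) / ( 1 + √( 1 − p(y)²/|c|² ) ) = 1 + k + f''(y) for all y. Uniqueness means: if f₁ and f₂ both satisfy these conditions (each with its own constant k), then f₁ − f₂ is constant. -/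
open scoped ContDiff Topology ENNReal NNReal
open Set Filter

noncomputable def psi (b t : ℝ) : ℝ := t - 2 * t / (t ^ 2 + b ^ 2)

lemma psi_contDiff {b : ℝ} (hb : 0 < b) : ContDiff ℝ ω (psi b) := by
  apply contDiff_id.sub
  apply ContDiff.div
  · exact contDiff_const.mul contDiff_id
  · exact (contDiff_id.pow 2).add contDiff_const
  · intro t
    positivity

lemma psi_hasDerivAt {b : ℝ} (hb : 0 < b) (t : ℝ) :
    HasDerivAt (psi b) (1 - 2 * (b ^ 2 - t ^ 2) / (t ^ 2 + b ^ 2) ^ 2) t := by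
  have hD : (t ^ 2 + b ^ 2) ≠ 0 := by positivity
  have h1 : HasDerivAt (fun t : ℝ => 2 * t) 2 t := by
    simpa using (hasDerivAt_id t).const_mul (2 : ℝ)
  have h2 : HasDerivAt (fun t : ℝ => t ^ 2 + b ^ 2) (2 * t) t := by
    simpa using (hasDerivAt_pow 2 t).add_const (b ^ 2)
  have h3 := h1.div h2 hD
  have h4 := (hasDerivAt_id t).sub h3
  convert h4 using 1
  · rfl
  · rfl
  · rfl
  have hD2 : ((t ^ 2 + b ^ 2) ^ 2) ≠ 0 := by positivity
  field_simp
  ring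

lemma psi_deriv_le {b : ℝ} (hb : 0 < b) (hb3 : b < 3 / 10) {t : ℝ}
    (h0 : 0 ≤ t) (h1 : t ≤ 3 * b / 4) :
    1 - 2 * (b ^ 2 - t ^ 2) / (t ^ 2 + b ^ 2) ^ 2 ≤ -2 := by
  have hD : (0:ℝ) < (t ^ 2 + b ^ 2) ^ 2 := by positivity
  have key : 3 * (t ^ 2 + b ^ 2) ^ 2 ≤ 2 * (b ^ 2 - t ^ 2) := by
    nlinarith [mul_self_le_mul_self h0 h1, mul_self_lt_mul_self hb.le hb3, sq_nonneg t,
      sq_nonneg b, mul_pos hb hb, sq_nonneg (t*b)]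
  have h2 : 3 ≤ 2 * (b ^ 2 - t ^ 2) / (t ^ 2 + b ^ 2) ^ 2 := by
    rw [le_div_iff₀ hD]
    linarith
  linarith

lemma psi_deriv {b : ℝ} (hb : 0 < b) (t : ℝ) :
    deriv (psi b) t = 1 - 2 * (b ^ 2 - t ^ 2) / (t ^ 2 + b ^ 2) ^ 2 :=
  (psi_hasDerivAt hb t).deriv

lemma psi_strictAntiOn {b : ℝ} (hb : 0 < b) (hb3 : b < 3 / 10) :
    StrictAntiOn (psi b) (Icc 0 (3 * b / 4)) := by
  apply strictAntiOn_of_deriv_neg (convex_Icc _ _) (psi_contDiff hb).continuous.continuousOn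
  intro t ht
  rw [interior_Icc] at ht
  rw [psi_deriv hb]
  have := psi_deriv_le hb hb3 ht.1.le ht.2.le
  linarith

lemma psi_gap {b : ℝ} (hb : 0 < b) (hb3 : b < 3 / 10) {s t : ℝ}
    (hs : s ∈ Icc 0 (3 * b / 4)) (ht : t ∈ Icc 0 (3 * b / 4)) (hst : s ≤ t) :
    2 * (t - s) ≤ psi b s - psi b t := by
  rcases eq_or_lt_of_le hst with h | h
  · simp [h]
  · obtain ⟨ξ, hξ, hslope⟩ := exists_deriv_eq_slope (psi b) h
      ((psi_contDiff hb).continuous.continuousOn)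
      ((psi_contDiff hb).differentiable (by simp)).differentiableOn
    have hξ' : ξ ∈ Icc (0:ℝ) (3 * b / 4) :=
      ⟨le_trans hs.1 hξ.1.le, le_trans hξ.2.le ht.2⟩
    have hd : deriv (psi b) ξ ≤ -2 := by
      rw [psi_deriv hb]
      exact psi_deriv_le hb hb3 hξ'.1 hξ'.2
    rw [hslope] at hd
    rw [div_le_iff₀ (by linarith)] at hd
    linarith

lemma psi_zero {b : ℝ} : psi b 0 = 0 := by simp [psi]

lemma psi_big {b : ℝ} (hb : 0 < b) (hb3 : b < 3 / 10) {t : ℝ}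
    (ht1 : 3 * b / 4 ≤ t) (ht2 : t ≤ b) : psi b t ≤ -(29 / 10) := by
  have ht0 : 0 < t := by linarith
  have hD : (0:ℝ) < t ^ 2 + b ^ 2 := by positivity
  have hpsi : psi b t = (t * (t ^ 2 + b ^ 2) - 2 * t) / (t ^ 2 + b ^ 2) := by
    unfold psi
    field_simp
  rw [hpsi, div_le_iff₀ hD]
  nlinarith [mul_nonneg (by linarith : (0:ℝ) ≤ 4 * t - 3 * b) (by linarith : (0:ℝ) ≤ 4 * b - 3 * t),
    mul_pos hb ht0, mul_pos ht0 ht0, mul_pos hb hb, sq_nonneg (t - b), sq_nonneg (t + b)]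

noncomputable def rho (b : ℝ) : ℝ → ℝ := Function.invFunOn (psi b) (Icc 0 (3 * b / 4))

lemma rho_spec' {b : ℝ} (hb : 0 < b) (hb3 : b < 3 / 10) {z : ℝ}
    (hz1 : -(29/10) ≤ z) (hz2 : z ≤ 0) :
    rho b z ∈ Icc 0 (3 * b / 4) ∧ psi b (rho b z) = z := by
  have h34 : (0:ℝ) ≤ 3 * b / 4 := by linarith
  have hsurj : ∃ t ∈ Icc 0 (3 * b / 4), psi b t = z := by
    have h := intermediate_value_Icc' h34 (psi_contDiff hb).continuous.continuousOn
    have hzmem : z ∈ Icc (psi b (3 * b / 4)) (psi b 0) := by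
      constructor
      · exact le_trans (psi_big hb hb3 le_rfl (by linarith)) hz1
      · rw [psi_zero]; exact hz2
    obtain ⟨t, ht, hpt⟩ := h hzmem
    exact ⟨t, ht, hpt⟩
  exact ⟨Function.invFunOn_mem hsurj, Function.invFunOn_eq hsurj⟩

lemma rho_lipschitz {b : ℝ} (hb : 0 < b) (hb3 : b < 3 / 10) {z w : ℝ}
    (hz1 : -(29/10) ≤ z) (hz2 : z ≤ 0) (hw1 : -(29/10) ≤ w) (hw2 : w ≤ 0) :
    |rho b z - rho b w| ≤ |z - w| / 2 := by
  obtain ⟨hzm, hzv⟩ := rho_spec' hb hb3 hz1 hz2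
  obtain ⟨hwm, hwv⟩ := rho_spec' hb hb3 hw1 hw2
  rcases le_total (rho b z) (rho b w) with h | h
  · have hgap := psi_gap hb hb3 hzm hwm h
    rw [hzv, hwv] at hgap
    have h1 : |rho b z - rho b w| = rho b w - rho b z := by
      rw [abs_sub_comm]; exact abs_of_nonneg (by linarith)
    have h2 : |z - w| = z - w := abs_of_nonneg (by linarith)
    rw [h1, h2]; linarith
  · have hgap := psi_gap hb hb3 hwm hzm h
    rw [hzv, hwv] at hgap
    have h1 : |rho b z - rho b w| = rho b z - rho b w := abs_of_nonneg (by linarith)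
    have h2 : |z - w| = w - z := by rw [abs_sub_comm]; exact abs_of_nonneg (by linarith)
    rw [h1, h2]; linarith

lemma rho_contDiffAt {b : ℝ} (hb : 0 < b) (hb3 : b < 3 / 10) {z : ℝ}
    (hz : z ∈ Icc (-(5/2) : ℝ) (-(1/2))) : ContDiffAt ℝ ω (rho b) z := by
  obtain ⟨hz1, hz2⟩ := hz
  obtain ⟨htm, htv⟩ := rho_spec' hb hb3 (z := z) (by linarith) (by linarith)
  set t₀ := rho b z with ht₀
  have ht0pos : 0 < t₀ := by
    rcases eq_or_lt_of_le htm.1 with h | h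
    · exfalso
      rw [← h, psi_zero] at htv
      linarith
    · exact h
  have ht0lt : t₀ < 3 * b / 4 := by
    rcases eq_or_lt_of_le htm.2 with h | h
    · exfalso
      have := psi_big hb hb3 (le_of_eq h.symm) (by linarith)
      rw [htv] at this
      linarith
    · exact h
  set m := 1 - 2 * (b ^ 2 - t₀ ^ 2) / (t₀ ^ 2 + b ^ 2) ^ 2 with hm
  have hmle : m ≤ -2 := psi_deriv_le hb hb3 htm.1 htm.2
  have hm0 : m ≠ 0 := by linarith
  have hD := psi_hasDerivAt hb t₀
  have hfd : HasFDerivAt (psi b)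
      (↑(ContinuousLinearEquiv.unitsEquivAut ℝ (Units.mk0 m hm0)) : ℝ →L[ℝ] ℝ) t₀ :=
    hD.hasFDerivAt_equiv hm0
  have hcd : ContDiffAt ℝ ω (psi b) t₀ := (psi_contDiff hb).contDiffAt
  have h1n : (ω : WithTop ℕ∞) ≠ 0 := by simp
  set g := hcd.localInverse hfd h1n with hg
  have hginv_cd : ContDiffAt ℝ ω g (psi b t₀) := hcd.to_localInverse hfd h1n
  have hS : HasStrictFDerivAt (psi b)
      (↑(ContinuousLinearEquiv.unitsEquivAut ℝ (Units.mk0 m hm0)) : ℝ →L[ℝ] ℝ) t₀ :=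
    hcd.hasStrictFDerivAt' hfd h1n
  have hrinv : ∀ᶠ y in 𝓝 (psi b t₀), psi b (g y) = y := hS.eventually_right_inverse
  have hgcont : ContinuousAt g (psi b t₀) := hS.localInverse_continuousAt
  have hgval : g (psi b t₀) = t₀ := hcd.localInverse_apply_image hfd h1n
  have hmem_ev : ∀ᶠ y in 𝓝 (psi b t₀), g y ∈ Ioo (0:ℝ) (3 * b / 4) := by
    have : Ioo (0:ℝ) (3 * b / 4) ∈ 𝓝 t₀ := isOpen_Ioo.mem_nhds ⟨ht0pos, ht0lt⟩
    have := hgcont.preimage_mem_nhds (by rwa [hgval])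
    exact this
  have hy_ev : ∀ᶠ y in 𝓝 (psi b t₀), y ∈ Ioo (-(29/10) : ℝ) 0 := by
    apply isOpen_Ioo.eventually_mem
    rw [htv]
    constructor <;> [linarith; linarith]
  have heq : rho b =ᶠ[𝓝 z] g := by
    rw [← htv]
    filter_upwards [hrinv, hmem_ev, hy_ev] with y h1 h2 h3
    obtain ⟨hym, hyv⟩ := rho_spec' hb hb3 h3.1.le h3.2.le
    exact (psi_strictAntiOn hb hb3).injOn hym (Ioo_subset_Icc_self h2) (by rw [hyv, h1])
  rw [← htv] at heq ⊢
  exact hginv_cd.congr_of_eventuallyEq heq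

section Helpers

/-- `p(y) := (1 + f''(y))·|c|² + |F(y)|²`. -/
noncomputable def pfun (c : ℂ) (F : ℝ → ℂ) (f : ℝ → ℝ) (y : ℝ) : ℝ :=
  (1 + deriv (deriv f) y) * (‖c‖) ^ 2 + (‖F y‖) ^ 2

/-- `f` is a smooth `1`-periodic solution of the translation-invariant real moment map
equation with data `(c, F)`. -/
noncomputable def IsGoodSolution (c : ℂ) (F : ℝ → ℂ) (f : ℝ → ℝ) : Prop :=
  ContDiff ℝ (⊤ : ℕ∞) f ∧ (∀ y, f (y + 1) = f y) ∧
  (∀ y, 0 < 1 + deriv (deriv f) y) ∧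
  (∀ y, pfun c F f y < ‖c‖) ∧
  ∃ k : ℝ, ∀ y,
    pfun c F f y / (1 + Real.sqrt (1 - (pfun c F f y) ^ 2 / (‖c‖) ^ 2)) =
      1 + k + deriv (deriv f) y

lemma sol_facts {c : ℂ} {F : ℝ → ℂ} {f : ℝ → ℝ} {k : ℝ}
    (hc0 : 0 < ‖c‖) (hc : ‖c‖ < 3 / 10)
    (hFbdd : ∀ y, ‖F y‖ ≤ ‖c‖)
    (hf : ContDiff ℝ (⊤ : ℕ∞) f) (hper : ∀ y, f (y + 1) = f y)
    (hpos : ∀ y, 0 < 1 + deriv (deriv f) y)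
    (hlt : ∀ y, pfun c F f y < ‖c‖)
    (heq : ∀ y, pfun c F f y /
        (1 + Real.sqrt (1 - (pfun c F f y) ^ 2 / (‖c‖) ^ 2)) =
      1 + k + deriv (deriv f) y) :
    Continuous (deriv (deriv f)) ∧ (-1 < k) ∧
    ((∫ y in (0:ℝ)..1, (1 + k + deriv (deriv f) y)) = 1 + k) ∧
    (∀ y, (1 + k + deriv (deriv f) y) ∈ Icc (0:ℝ) (3 * ‖c‖ / 4) ∧
      psi (‖c‖) (1 + k + deriv (deriv f) y) =
        k - (‖F y‖) ^ 2 / (‖c‖) ^ 2) := by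
  set b : ℝ := ‖c‖ with hbdef
  have hb2 : (0:ℝ) < b ^ 2 := by positivity
  have hb2ne : (b:ℝ) ^ 2 ≠ 0 := ne_of_gt hb2
  -- smoothness consequences
  have hfinf : ContDiff ℝ ∞ f := hf.of_le (by simp)
  have h1 := contDiff_infty_iff_deriv.mp hfinf
  have h2 := contDiff_infty_iff_deriv.mp h1.2
  have hu_cont : Continuous (deriv (deriv f)) := h2.2.continuous
  have hf'_diff : Differentiable ℝ (deriv f) := h2.1
  -- periodicity of deriv f
  have hperf : ∀ y, deriv f (y + 1) = deriv f y := by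
    intro y
    have e2 : (fun x => f (x + 1)) = f := funext hper
    have e1 : deriv (fun x => f (x + 1)) y = deriv f (y + 1) := deriv_comp_add_const f 1 y
    rw [e2] at e1
    exact e1.symm
  -- zero mean of second derivative
  have hint : (∫ y in (0:ℝ)..1, deriv (deriv f) y) = 0 := by
    rw [intervalIntegral.integral_deriv_eq_sub (fun x _ => hf'_diff x)
      (hu_cont.intervalIntegrable 0 1)]
    have : deriv f 1 = deriv f 0 := by
      have := hperf 0
      simpa using this
    rw [this, sub_self]
  -- a point where the second derivative vanishes
  have hy0 : ∃ y₀ : ℝ, deriv (deriv f) y₀ = 0 := by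
    by_contra hcon
    push_neg at hcon
    rcases lt_or_gt_of_ne (hcon 0) with hneg | hposs
    · have hall : ∀ y ∈ Ioo (0:ℝ) 1, deriv (deriv f) y < 0 := by
        intro y hy
        rcases lt_trichotomy (deriv (deriv f) y) 0 with h | h | h
        · exact h
        · exact absurd h (hcon y)
        · exfalso
          have hIcc := intermediate_value_Icc (le_of_lt hy.1) hu_cont.continuousOn
          have : (0:ℝ) ∈ Icc (deriv (deriv f) 0) (deriv (deriv f) y) := ⟨hneg.le, h.le⟩
          obtain ⟨x, _, hx⟩ := hIcc this
          exact hcon x hx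
      have hltint : 0 < ∫ y in (0:ℝ)..1, -(deriv (deriv f) y) := by
        apply intervalIntegral.intervalIntegral_pos_of_pos_on
          ((hu_cont.neg).intervalIntegrable 0 1)
          (fun x hx => by simpa using hall x hx) one_pos
      rw [intervalIntegral.integral_neg, hint] at hltint
      simp at hltint
    · have hall : ∀ y ∈ Ioo (0:ℝ) 1, 0 < deriv (deriv f) y := by
        intro y hy
        rcases lt_trichotomy (deriv (deriv f) y) 0 with h | h | h
        · exfalso
          have hIcc := intermediate_value_Icc' (le_of_lt hy.1) hu_cont.continuousOn
          have : (0:ℝ) ∈ Icc (deriv (deriv f) y) (deriv (deriv f) 0) := ⟨h.le, hposs.le⟩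
          obtain ⟨x, _, hx⟩ := hIcc this
          exact hcon x hx
        · exact absurd h (hcon y)
        · exact h
      have hltint : 0 < ∫ y in (0:ℝ)..1, deriv (deriv f) y :=
        intervalIntegral.intervalIntegral_pos_of_pos_on
          (hu_cont.intervalIntegrable 0 1) hall one_pos
      rw [hint] at hltint
      exact lt_irrefl 0 hltint
  -- basic facts about p at any point
  have hq0 : ∀ y, (0:ℝ) ≤ (‖F y‖) ^ 2 := fun y => by positivity
  have hqb : ∀ y, (‖F y‖) ^ 2 ≤ b ^ 2 := fun y =>
    pow_le_pow_left₀ (by positivity) (hFbdd y) 2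
  have hp_pos : ∀ y, 0 < pfun c F f y := by
    intro y
    have h := hpos y
    have := hq0 y
    unfold pfun
    nlinarith [mul_pos h hb2]
  -- k > -1
  obtain ⟨y₀, hy₀⟩ := hy0
  have hkgt : -1 < k := by
    have h := heq y₀
    rw [hy₀] at h
    have hs0 : 0 ≤ Real.sqrt (1 - (pfun c F f y₀) ^ 2 / b ^ 2) := Real.sqrt_nonneg _
    have : 0 < pfun c F f y₀ / (1 + Real.sqrt (1 - (pfun c F f y₀) ^ 2 / b ^ 2)) :=
      div_pos (hp_pos y₀) (by linarith)
    rw [h] at this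
    linarith
  -- pointwise structure
  have hpoint : ∀ y, (1 + k + deriv (deriv f) y) ∈ Icc (0:ℝ) (3 * b / 4) ∧
      psi b (1 + k + deriv (deriv f) y) = k - (‖F y‖) ^ 2 / b ^ 2 := by
    intro y
    set p : ℝ := pfun c F f y with hp
    set t : ℝ := 1 + k + deriv (deriv f) y with ht
    set s : ℝ := Real.sqrt (1 - p ^ 2 / b ^ 2) with hs
    have hs0 : 0 ≤ s := Real.sqrt_nonneg _
    have ht_eq : p / (1 + s) = t := heq y
    have hppos := hp_pos y
    have ht_pos : 0 < t := by
      rw [← ht_eq]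
      exact div_pos hppos (by linarith)
    have ht_le_p : t ≤ p := by
      rw [← ht_eq]
      exact div_le_self hppos.le (by linarith)
    have hpltb : p < b := hlt y
    have ht_lt_b : t < b := lt_of_le_of_lt ht_le_p hpltb
    have hsqarg : 0 ≤ 1 - p ^ 2 / b ^ 2 := by
      have : p ^ 2 < b ^ 2 := by nlinarith
      rw [sub_nonneg, div_le_one hb2]
      linarith
    have hs_sq : s ^ 2 = 1 - p ^ 2 / b ^ 2 := Real.sq_sqrt hsqarg
    have hpts : p = t * (1 + s) := by
      rw [← ht_eq]
      field_simp
    have h6 : p - t = t * s := by rw [hpts]; ring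
    have h5 : (p - t) ^ 2 * b ^ 2 = t ^ 2 * (b ^ 2 - p ^ 2) := by
      rw [h6]
      have e : (t * s) ^ 2 = t ^ 2 * s ^ 2 := by ring
      rw [e, hs_sq]
      field_simp
    have hkey : p * (t ^ 2 + b ^ 2) = 2 * b ^ 2 * t := by
      apply mul_left_cancel₀ (ne_of_gt hppos)
      nlinarith [h5]
    have hden : t ^ 2 + b ^ 2 ≠ 0 := by positivity
    have h2t : 2 * t / (t ^ 2 + b ^ 2) = p / b ^ 2 := by
      rw [div_eq_div_iff hden hb2ne]
      linarith [hkey]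
    have hpsival : psi b t = k - (‖F y‖) ^ 2 / b ^ 2 := by
      unfold psi
      rw [h2t, hp]
      unfold pfun
      rw [ht]
      field_simp
      ring
    have hqy := hqb y
    have hpsigt : psi b t > -2 := by
      rw [hpsival]
      have : (‖F y‖) ^ 2 / b ^ 2 ≤ 1 := by
        rw [div_le_one hb2]; exact hqy
      linarith
    have ht34 : t ≤ 3 * b / 4 := by
      by_contra hcon
      push_neg at hcon
      have := psi_big hc0 hc hcon.le ht_lt_b.le
      linarith
    exact ⟨⟨ht_pos.le, ht34⟩, hpsival⟩
  refine ⟨hu_cont, hkgt, ?_, hpoint⟩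
  rw [intervalIntegral.integral_add (intervalIntegrable_const)
    (hu_cont.intervalIntegrable 0 1), hint, intervalIntegral.integral_const]
  simp

end Helpers
set_option maxHeartbeats 2000000 in
/-- for `0 < |c| < 3/10` and `F` smooth `1`-periodic with `|F| ≤ |c|`,
there is a solution `f`, unique up to an additive constant. -/
theorem statement11 (c : ℂ) (hc0 : 0 < ‖c‖) (hc : ‖c‖ < 3 / 10)
    (F : ℝ → ℂ) (hF : ContDiff ℝ (⊤ : ℕ∞) F) (hFper : ∀ y, F (y + 1) = F y)
    (hFbdd : ∀ y, ‖F y‖ ≤ ‖c‖) :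
    (∃ f : ℝ → ℝ, IsGoodSolution c F f) ∧
    (∀ f₁ f₂ : ℝ → ℝ, IsGoodSolution c F f₁ → IsGoodSolution c F f₂ →
      ∃ C : ℝ, ∀ y, f₁ y - f₂ y = C) := by
  have hb2 : (0:ℝ) < (‖c‖) ^ 2 := by positivity
  have hb2ne : (‖c‖ : ℝ) ^ 2 ≠ 0 := ne_of_gt hb2
  set b : ℝ := ‖c‖ with hbdef
  constructor
  · -- EXISTENCE
    set q : ℝ → ℝ := fun y => (‖F y‖) ^ 2 with hqdef
    have hq_cd : ContDiff ℝ ∞ q := by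
      have hqeq : q = fun y => (F y).re ^ 2 + (F y).im ^ 2 := by
        funext y
        rw [hqdef]
        simp only
        rw [Complex.sq_norm, Complex.normSq_apply]
        ring
      rw [hqeq]
      have hre : ContDiff ℝ ∞ fun y => (F y).re := Complex.reCLM.contDiff.comp hF
      have him : ContDiff ℝ ∞ fun y => (F y).im := Complex.imCLM.contDiff.comp hF
      exact (hre.pow 2).add (him.pow 2)
    have hq0 : ∀ y, 0 ≤ q y := fun y => by positivity
    have hqb : ∀ y, q y ≤ b ^ 2 := fun y => pow_le_pow_left₀ (by positivity) (hFbdd y) 2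
    have hqper : ∀ y, q (y + 1) = q y := fun y => by
      rw [hqdef]; simp only; rw [hFper y]
    have hzmem : ∀ k ∈ Icc (-(3/2):ℝ) (-(1/2)), ∀ y,
        (k - q y / b ^ 2) ∈ Icc (-(5/2):ℝ) (-(1/2)) := by
      intro k hk y
      have h1 : q y / b ^ 2 ≤ 1 := by rw [div_le_one hb2]; exact hqb y
      have h2 : 0 ≤ q y / b ^ 2 := by positivity
      exact ⟨by linarith [hk.1], by linarith [hk.2]⟩
    have hrho_mem : ∀ {z : ℝ}, z ∈ Icc (-(5/2):ℝ) (-(1/2)) →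
        rho b z ∈ Icc 0 (3 * b / 4) ∧ psi b (rho b z) = z := fun hz =>
      rho_spec' hc0 hc (by linarith [hz.1]) (by linarith [hz.2])
    have htk_cont : ∀ k ∈ Icc (-(3/2):ℝ) (-(1/2)),
        Continuous fun y => rho b (k - q y / b ^ 2) := by
      intro k hk
      rw [continuous_iff_continuousAt]
      intro y
      have h2 : ContinuousAt (fun y : ℝ => k - q y / b ^ 2) y :=
        (continuous_const.sub (hq_cd.continuous.div_const _)).continuousAt
      exact ContinuousAt.comp (rho_contDiffAt hc0 hc (hzmem k hk y)).continuousAt h2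
    set Mf : ℝ → ℝ := fun k => (∫ y in (0:ℝ)..1, rho b (k - q y / b ^ 2)) - 1 - k with hMf
    have hIbound : ∀ k ∈ Icc (-(3/2):ℝ) (-(1/2)),
        |∫ y in (0:ℝ)..1, rho b (k - q y / b ^ 2)| ≤ 3 * b / 4 := by
      intro k hk
      have h := intervalIntegral.norm_integral_le_of_norm_le_const
        (C := 3 * b / 4) (f := fun y => rho b (k - q y / b ^ 2)) (a := 0) (b := 1) ?_
      · simpa using h
      · intro x _
        have hm := (hrho_mem (hzmem k hk x)).1
        rw [Real.norm_eq_abs, abs_of_nonneg hm.1]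
        exact hm.2
    have hMlip : ∀ k ∈ Icc (-(3/2):ℝ) (-(1/2)), ∀ k' ∈ Icc (-(3/2):ℝ) (-(1/2)),
        |Mf k - Mf k'| ≤ 2 * |k - k'| := by
      intro k hk k' hk'
      have hints : IntervalIntegrable (fun y => rho b (k - q y / b ^ 2))
          MeasureTheory.volume 0 1 := (htk_cont k hk).intervalIntegrable 0 1
      have hints' : IntervalIntegrable (fun y => rho b (k' - q y / b ^ 2))
          MeasureTheory.volume 0 1 := (htk_cont k' hk').intervalIntegrable 0 1
      have hbd : ‖∫ y in (0:ℝ)..1,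
          (rho b (k - q y / b ^ 2) - rho b (k' - q y / b ^ 2))‖ ≤ |k - k'| / 2 * |1 - (0:ℝ)| := by
        apply intervalIntegral.norm_integral_le_of_norm_le_const
        intro x _
        have h1 := hzmem k hk x
        have h2 := hzmem k' hk' x
        have hl := rho_lipschitz hc0 hc (z := k - q x / b ^ 2) (w := k' - q x / b ^ 2)
          (by linarith [h1.1]) (by linarith [h1.2]) (by linarith [h2.1]) (by linarith [h2.2])
        rw [Real.norm_eq_abs]
        have he : (k - q x / b ^ 2) - (k' - q x / b ^ 2) = k - k' := by ring
        rw [he] at hl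
        exact hl
      rw [Real.norm_eq_abs] at hbd
      have hsub : (∫ y in (0:ℝ)..1, rho b (k - q y / b ^ 2)) -
          (∫ y in (0:ℝ)..1, rho b (k' - q y / b ^ 2)) =
          ∫ y in (0:ℝ)..1, (rho b (k - q y / b ^ 2) - rho b (k' - q y / b ^ 2)) :=
        (intervalIntegral.integral_sub hints hints').symm
      have he2 : Mf k - Mf k' = ((∫ y in (0:ℝ)..1, rho b (k - q y / b ^ 2)) -
          (∫ y in (0:ℝ)..1, rho b (k' - q y / b ^ 2))) - (k - k') := by
        rw [hMf]; ring
      rw [he2, hsub]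
      calc |(∫ y in (0:ℝ)..1, (rho b (k - q y / b ^ 2) - rho b (k' - q y / b ^ 2))) - (k - k')|
          ≤ |∫ y in (0:ℝ)..1, (rho b (k - q y / b ^ 2) - rho b (k' - q y / b ^ 2))| + |k - k'| :=
            abs_sub _ _
        _ ≤ |k - k'| / 2 * |1 - (0:ℝ)| + |k - k'| := by linarith [hbd]
        _ ≤ 2 * |k - k'| := by
            rw [show |(1:ℝ) - 0| = 1 by norm_num]
            linarith [abs_nonneg (k - k')]
    have hMcont : ContinuousOn Mf (Icc (-(3/2):ℝ) (-(1/2))) := by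
      have hL : LipschitzOnWith 2 Mf (Icc (-(3/2):ℝ) (-(1/2))) := by
        apply LipschitzOnWith.of_dist_le_mul
        intro x hx y hy
        rw [Real.dist_eq, Real.dist_eq]
        have := hMlip x hx y hy
        push_cast
        linarith
      exact hL.continuousOn
    have hmem1 : (-(1/2):ℝ) ∈ Icc (-(3/2):ℝ) (-(1/2)) := by constructor <;> norm_num
    have hmem2 : (-(3/2):ℝ) ∈ Icc (-(3/2):ℝ) (-(1/2)) := by constructor <;> norm_num
    have hMneg : Mf (-(1/2)) < 0 := by
      have h := hIbound _ hmem1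
      have := abs_le.mp h
      rw [hMf]
      simp only
      linarith [this.2]
    have hMpos : 0 < Mf (-(3/2)) := by
      have h := hIbound _ hmem2
      have := abs_le.mp h
      rw [hMf]
      simp only
      linarith [this.1]
    obtain ⟨k₀, hk₀mem, hMk₀⟩ :=
      intermediate_value_Icc' (by norm_num : (-(3/2):ℝ) ≤ -(1/2)) hMcont
        ⟨hMneg.le, hMpos.le⟩
    set u : ℝ → ℝ := fun y => rho b (k₀ - q y / b ^ 2) - (1 + k₀) with hu
    have hu_cd : ContDiff ℝ ∞ u := by
      rw [contDiff_iff_contDiffAt]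
      intro y
      have h1 : ContDiffAt ℝ ∞ (fun y => rho b (k₀ - q y / b ^ 2)) y :=
        ((rho_contDiffAt hc0 hc (hzmem k₀ hk₀mem y)).of_le le_top).comp y
          ((contDiff_const.sub (hq_cd.div_const _)).contDiffAt)
      exact h1.sub contDiffAt_const
    have hu_cont : Continuous u := hu_cd.continuous
    have hu_per : ∀ y, u (y + 1) = u y := by
      intro y
      rw [hu]
      simp only
      rw [hqper]
    have hu_int : (∫ y in (0:ℝ)..1, u y) = 0 := by
      rw [hu]
      simp only
      rw [intervalIntegral.integral_sub ((htk_cont k₀ hk₀mem).intervalIntegrable 0 1)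
        intervalIntegrable_const, intervalIntegral.integral_const]
      have : Mf k₀ = 0 := hMk₀
      rw [hMf] at this
      simp only at this
      simp
      linarith
    -- FTC helpers
    have hFTC : ∀ (v : ℝ → ℝ), Continuous v → ∀ y : ℝ,
        HasDerivAt (fun x => ∫ t in (0:ℝ)..x, v t) (v y) y := by
      intro v hv y
      exact intervalIntegral.integral_hasDerivAt_right (hv.intervalIntegrable 0 y)
        (hv.stronglyMeasurableAtFilter _ _) hv.continuousAt
    have hperInt : ∀ (v : ℝ → ℝ), Continuous v → (∀ y, v (y + 1) = v y) →
        (∫ t in (0:ℝ)..1, v t) = 0 →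
        ∀ y : ℝ, (∫ t in (0:ℝ)..(y+1), v t) = ∫ t in (0:ℝ)..y, v t := by
      intro v hv hp hz y
      have h1 : (∫ t in (0:ℝ)..y, v t) + (∫ t in y..(y+1), v t) = ∫ t in (0:ℝ)..(y+1), v t :=
        intervalIntegral.integral_add_adjacent_intervals (hv.intervalIntegrable 0 y)
          (hv.intervalIntegrable y (y+1))
      have h2 : (∫ t in y..(y+1), v t) = ∫ t in (0:ℝ)..(0+1:ℝ), v t :=
        Function.Periodic.intervalIntegral_add_eq hp y 0
      rw [show ((0:ℝ)+1) = 1 by norm_num] at h2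
      rw [hz] at h2
      rw [← h1, h2, add_zero]
    set g1 : ℝ → ℝ := fun x => ∫ t in (0:ℝ)..x, u t with hg1
    have hg1d : ∀ y, HasDerivAt g1 (u y) y := hFTC u hu_cont
    have hg1per : ∀ y, g1 (y + 1) = g1 y := fun y => hperInt u hu_cont hu_per hu_int y
    have hg1cont : Continuous g1 := continuous_iff_continuousAt.mpr fun y =>
      (hg1d y).continuousAt
    set cst : ℝ := ∫ t in (0:ℝ)..1, g1 t with hcst
    set w : ℝ → ℝ := fun y => g1 y - cst with hw
    have hw_cont : Continuous w := hg1cont.sub continuous_const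
    have hw_per : ∀ y, w (y + 1) = w y := fun y => by rw [hw]; simp only; rw [hg1per]
    have hw_int : (∫ t in (0:ℝ)..1, w t) = 0 := by
      rw [hw]
      simp only
      rw [intervalIntegral.integral_sub (hg1cont.intervalIntegrable 0 1)
        intervalIntegrable_const, intervalIntegral.integral_const]
      simp [hcst]
    set f : ℝ → ℝ := fun x => ∫ t in (0:ℝ)..x, w t with hfdef
    have hfd : ∀ y, HasDerivAt f (w y) y := hFTC w hw_cont
    have hf_per : ∀ y, f (y + 1) = f y := fun y => hperInt w hw_cont hw_per hw_int y
    have hg1_cd : ContDiff ℝ ∞ g1 := contDiff_infty_iff_deriv.mpr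
      ⟨fun y => (hg1d y).differentiableAt, by
        rw [show deriv g1 = u from funext fun y => (hg1d y).deriv]; exact hu_cd⟩
    have hw_cd : ContDiff ℝ ∞ w := hg1_cd.sub contDiff_const
    have hf_cd : ContDiff ℝ (⊤ : ℕ∞) f := contDiff_infty_iff_deriv.mpr
      ⟨fun y => (hfd y).differentiableAt, by
        rw [show deriv f = w from funext fun y => (hfd y).deriv]; exact hw_cd⟩
    have hderiv1 : deriv f = w := funext fun y => (hfd y).deriv
    have hderiv2 : deriv (deriv f) = u := by
      rw [hderiv1]
      funext y
      have : HasDerivAt w (u y) y := by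
        rw [hw]
        exact (hg1d y).sub_const cst
      exact this.deriv
    -- final verification
    have hk₀1 : -(3/2) ≤ k₀ := hk₀mem.1
    have hk₀2 : k₀ ≤ -(1/2) := hk₀mem.2
    refine ⟨f, hf_cd, hf_per, ?_, ?_, k₀, ?_⟩
    · intro y
      have htmem := (hrho_mem (hzmem k₀ hk₀mem y)).1
      rw [hderiv2]
      simp only [hu]
      linarith [htmem.1]
    · intro y
      obtain ⟨htmem, htval⟩ := hrho_mem (hzmem k₀ hk₀mem y)
      have hUY : deriv (deriv f) y = rho b (k₀ - q y / b ^ 2) - (1 + k₀) := by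
        simp only [hderiv2, hu]
      set t : ℝ := rho b (k₀ - q y / b ^ 2) with htdef
      clear_value t
      have hden : (0:ℝ) < t ^ 2 + b ^ 2 := by positivity
      have h2t : 2 * t / (t ^ 2 + b ^ 2) = t - k₀ + q y / b ^ 2 := by
        unfold psi at htval
        linarith
      have hqy : ‖F y‖ ^ 2 = q y := rfl
      have hp_eq : pfun c F f y = 2 * t * b ^ 2 / (t ^ 2 + b ^ 2) := by
        unfold pfun
        rw [hUY, hqy,
          show 2 * t * b ^ 2 / (t ^ 2 + b ^ 2) = (2 * t / (t ^ 2 + b ^ 2)) * b ^ 2 by ring,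
          h2t]
        field_simp
        ring
      rw [hp_eq, div_lt_iff₀ hden]
      have htb : t < b := lt_of_le_of_lt htmem.2 (by linarith)
      nlinarith [mul_pos (sub_pos.mpr htb) (sub_pos.mpr htb), hc0, htmem.1]
    · intro y
      obtain ⟨htmem, htval⟩ := hrho_mem (hzmem k₀ hk₀mem y)
      have hUY : deriv (deriv f) y = rho b (k₀ - q y / b ^ 2) - (1 + k₀) := by
        simp only [hderiv2, hu]
      set t : ℝ := rho b (k₀ - q y / b ^ 2) with htdef
      clear_value t
      have hden : (0:ℝ) < t ^ 2 + b ^ 2 := by positivity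
      have h2t : 2 * t / (t ^ 2 + b ^ 2) = t - k₀ + q y / b ^ 2 := by
        unfold psi at htval
        linarith
      have hqy : ‖F y‖ ^ 2 = q y := rfl
      have hp_eq : pfun c F f y = 2 * t * b ^ 2 / (t ^ 2 + b ^ 2) := by
        unfold pfun
        rw [hUY, hqy,
          show 2 * t * b ^ 2 / (t ^ 2 + b ^ 2) = (2 * t / (t ^ 2 + b ^ 2)) * b ^ 2 by ring,
          h2t]
        field_simp
        ring
      have hrhs : 1 + k₀ + deriv (deriv f) y = t := by
        rw [hUY]; ring
      rw [hp_eq, hrhs]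
      have htb2 : t ^ 2 ≤ b ^ 2 := by nlinarith [htmem.1, htmem.2, hc0]
      have hsq : 1 - (2 * t * b ^ 2 / (t ^ 2 + b ^ 2)) ^ 2 / b ^ 2 =
          ((b ^ 2 - t ^ 2) / (t ^ 2 + b ^ 2)) ^ 2 := by
        field_simp
        ring
      have hsplus : 1 + (b ^ 2 - t ^ 2) / (t ^ 2 + b ^ 2) = 2 * b ^ 2 / (t ^ 2 + b ^ 2) := by
        field_simp
        ring
      have hfin : 2 * t * b ^ 2 / (t ^ 2 + b ^ 2) / (2 * b ^ 2 / (t ^ 2 + b ^ 2)) = t := by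
        rw [div_div_div_cancel_right₀]
        · field_simp
        · exact ne_of_gt hden
      rw [hsq, Real.sqrt_sq (div_nonneg (by linarith) hden.le), hsplus, hfin]
  · -- UNIQUENESS
    intro f₁ f₂ h₁ h₂
    obtain ⟨hf₁, hper₁, hpos₁, hlt₁, k₁, heq₁⟩ := h₁
    obtain ⟨hf₂, hper₂, hpos₂, hlt₂, k₂, heq₂⟩ := h₂
    obtain ⟨hcont₁, hk₁, hint₁, hpt₁⟩ := sol_facts hc0 hc hFbdd hf₁ hper₁ hpos₁ hlt₁ heq₁
    obtain ⟨hcont₂, hk₂, hint₂, hpt₂⟩ := sol_facts hc0 hc hFbdd hf₂ hper₂ hpos₂ hlt₂ heq₂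
    -- comparison of constants
    have key : ∀ (fa fb : ℝ → ℝ) (ka kb : ℝ),
        Continuous (deriv (deriv fa)) → Continuous (deriv (deriv fb)) →
        ((∫ y in (0:ℝ)..1, (1 + ka + deriv (deriv fa) y)) = 1 + ka) →
        ((∫ y in (0:ℝ)..1, (1 + kb + deriv (deriv fb) y)) = 1 + kb) →
        (∀ y, (1 + ka + deriv (deriv fa) y) ∈ Icc (0:ℝ) (3 * b / 4) ∧
          psi b (1 + ka + deriv (deriv fa) y) = ka - (‖F y‖) ^ 2 / b ^ 2) →
        (∀ y, (1 + kb + deriv (deriv fb) y) ∈ Icc (0:ℝ) (3 * b / 4) ∧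
          psi b (1 + kb + deriv (deriv fb) y) = kb - (‖F y‖) ^ 2 / b ^ 2) →
        ka ≤ kb → kb ≤ ka := by
      intro fa fb ka kb hca hcb hia hib hpa hpb hab
      have hpt : ∀ y, 1 + kb + deriv (deriv fb) y ≤ 1 + ka + deriv (deriv fa) y := by
        intro y
        by_contra hcon
        push_neg at hcon
        have h1 := (psi_strictAntiOn hc0 hc) (hpa y).1 (hpb y).1 hcon
        rw [(hpa y).2, (hpb y).2] at h1
        linarith
      have hIa : IntervalIntegrable (fun y => 1 + ka + deriv (deriv fa) y)
          MeasureTheory.volume 0 1 := (continuous_const.add hca).intervalIntegrable 0 1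
      have hIb : IntervalIntegrable (fun y => 1 + kb + deriv (deriv fb) y)
          MeasureTheory.volume 0 1 := (continuous_const.add hcb).intervalIntegrable 0 1
      have hi : 1 + kb ≤ 1 + ka := by
        rw [← hia, ← hib]
        exact intervalIntegral.integral_mono_on zero_le_one hIb hIa (fun x _ => hpt x)
      linarith
    have hk12 : k₁ = k₂ := by
      rcases le_total k₁ k₂ with h | h
      · exact le_antisymm h (key f₁ f₂ k₁ k₂ hcont₁ hcont₂ hint₁ hint₂ hpt₁ hpt₂ h)
      · exact (le_antisymm h (key f₂ f₁ k₂ k₁ hcont₂ hcont₁ hint₂ hint₁ hpt₂ hpt₁ h)).symm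
    have huu : ∀ y, deriv (deriv f₁) y = deriv (deriv f₂) y := by
      intro y
      have e1 := (hpt₁ y).2
      have e2 := (hpt₂ y).2
      have heqpsi : psi b (1 + k₁ + deriv (deriv f₁) y) = psi b (1 + k₂ + deriv (deriv f₂) y) := by
        rw [e1, e2, hk12]
      have := (psi_strictAntiOn hc0 hc).injOn (hpt₁ y).1 (hpt₂ y).1 heqpsi
      have hk := hk12
      linarith
    have hdiff₁ : Differentiable ℝ f₁ := (contDiff_infty_iff_deriv.mp (hf₁.of_le (by simp))).1
    have hdiff₁' : Differentiable ℝ (deriv f₁) :=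
      (contDiff_infty_iff_deriv.mp (contDiff_infty_iff_deriv.mp (hf₁.of_le (by simp))).2).1
    have hdiff₂ : Differentiable ℝ f₂ := (contDiff_infty_iff_deriv.mp (hf₂.of_le (by simp))).1
    have hdiff₂' : Differentiable ℝ (deriv f₂) :=
      (contDiff_infty_iff_deriv.mp (contDiff_infty_iff_deriv.mp (hf₂.of_le (by simp))).2).1
    have hDconst : ∀ y, deriv f₁ y - deriv f₂ y = deriv f₁ 0 - deriv f₂ 0 := by
      intro y
      exact is_const_of_deriv_eq_zero (hdiff₁'.sub hdiff₂')
        (fun x => by rw [deriv_sub (hdiff₁' x) (hdiff₂' x), huu x]; ring) y 0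
    set m : ℝ := deriv f₁ 0 - deriv f₂ 0 with hm
    have hEd : ∀ y : ℝ, HasDerivAt (fun x => f₁ x - f₂ x - m * x) 0 y := by
      intro y
      have hcm : HasDerivAt (fun x : ℝ => m * x) m y := by
        simpa using (hasDerivAt_id y).const_mul m
      have h1 : HasDerivAt (fun x => f₁ x - f₂ x - m * x)
          (deriv f₁ y - deriv f₂ y - m) y :=
        (((hdiff₁ y).hasDerivAt).sub ((hdiff₂ y).hasDerivAt)).sub hcm
      have h2 : deriv f₁ y - deriv f₂ y - m = 0 := by
        have := hDconst y
        linarith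
      rwa [h2] at h1
    have hEconst : ∀ y : ℝ, f₁ y - f₂ y - m * y = f₁ 0 - f₂ 0 - m * 0 := by
      intro y
      exact is_const_of_deriv_eq_zero (fun x => (hEd x).differentiableAt)
        (fun x => (hEd x).deriv) y 0
    have hm0 : m = 0 := by
      have h1 := hEconst 1
      have h2 : f₁ 1 = f₁ 0 := by simpa using hper₁ 0
      have h3 : f₂ 1 = f₂ 0 := by simpa using hper₂ 0
      rw [h2, h3] at h1
      linarith
    refine ⟨f₁ 0 - f₂ 0, fun y => ?_⟩
    have := hEconst y
    rw [hm0] at this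
    linarith
end

section
/- Let Ω ⊆ ℝⁿ be open, let v : Ω → ℝ be a smooth function whose Hessian D²v(x) is positive definite for every x ∈ Ω, and suppose the gradient map ∇v : Ω → Ω' is a diffeomorphism onto an open set Ω' ⊆ ℝⁿ. Let u : Ω' → ℝ be the Legendre transform of v, defined by u(y) = x·y − v(x) where x = (∇v)⁻¹(y). Then for every smooth map χ : Ω' → ℝⁿ, setting X^a(x) := χ_a(∇v(x)), the following identity holds for all x ∈ Ω: ∑_a ∂X^a/∂x^a (x) + ∑_{a,b,c} X^b(x) · ((D²v(x))⁻¹)_{ac} · ∂³v/∂x^a∂x^b∂x^c (x) = [ ∑_{a,b} ∂/∂y^a ( ((D²u)⁻¹)_{ab} · χ_b ) ] (∇v(x)). -/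
/-- The gradient of a function `v : ℝⁿ → ℝ`. -/
noncomputable def gradF (n : ℕ) (v : (Fin n → ℝ) → ℝ) (x : Fin n → ℝ) : Fin n → ℝ :=
  fun i => fderiv ℝ v x (Pi.single i 1)

/-- The Hessian matrix of a function `v : ℝⁿ → ℝ`. -/
noncomputable def hessF (n : ℕ) (v : (Fin n → ℝ) → ℝ) (x : Fin n → ℝ) :
    Matrix (Fin n) (Fin n) ℝ :=
  Matrix.of fun i j =>
    fderiv ℝ (fun z => fderiv ℝ v z (Pi.single j 1)) x (Pi.single i 1)

/-- The partial derivative `∂_c f` of a real-valued function on `ℝⁿ`. -/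
noncomputable def pderivR (n : ℕ) (c : Fin n) (f : (Fin n → ℝ) → ℝ) (y : Fin n → ℝ) : ℝ :=
  fderiv ℝ f y (Pi.single c 1)

open Matrix

lemma clm_apply_sum {n : ℕ} {F : Type*} [NormedAddCommGroup F] [NormedSpace ℝ F]
    (L : (Fin n → ℝ) →L[ℝ] F) (h : Fin n → ℝ) :
    L h = ∑ i, h i • L (Pi.single i 1) := by
  have : h = ∑ i, h i • (Pi.single i (1:ℝ) : Fin n → ℝ) := by
    funext j
    simp [Finset.sum_apply, Pi.single_apply]
  conv_lhs => rw [this]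
  rw [map_sum]
  simp

lemma clm_apply_sum_r {n : ℕ} (L : (Fin n → ℝ) →L[ℝ] ℝ) (h : Fin n → ℝ) :
    L h = ∑ i, h i * L (Pi.single i 1) := by
  simpa [smul_eq_mul] using clm_apply_sum L h

lemma fderiv_component {n : ℕ} {g : (Fin n → ℝ) → (Fin n → ℝ)} {x : Fin n → ℝ}
    (hg : DifferentiableAt ℝ g x) (c : Fin n) (h : Fin n → ℝ) :
    fderiv ℝ (fun z => g z c) x h = fderiv ℝ g x h c := by
  have H : HasFDerivAt (fun z => g z c)
      ((ContinuousLinearMap.proj (R := ℝ) (φ := fun _ : Fin n => ℝ) c).comp (fderiv ℝ g x)) x :=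
    (ContinuousLinearMap.proj (R := ℝ) (φ := fun _ : Fin n => ℝ) c).hasFDerivAt.comp x
      hg.hasFDerivAt
  rw [H.fderiv]
  rfl

lemma pderiv_comp_eq {n : ℕ} {f : (Fin n → ℝ) → ℝ} {g : (Fin n → ℝ) → (Fin n → ℝ)}
    {x : Fin n → ℝ} (hf : DifferentiableAt ℝ f (g x)) (hg : DifferentiableAt ℝ g x) (a : Fin n) :
    fderiv ℝ (fun z => f (g z)) x (Pi.single a 1)
      = ∑ c, fderiv ℝ (fun z => g z c) x (Pi.single a 1) * fderiv ℝ f (g x) (Pi.single c 1) := by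
  have hc : fderiv ℝ (fun z => f (g z)) x = (fderiv ℝ f (g x)).comp (fderiv ℝ g x) :=
    fderiv_comp x hf hg
  rw [hc, ContinuousLinearMap.comp_apply, clm_apply_sum_r]
  exact Finset.sum_congr rfl fun c _ => by rw [fderiv_component hg]

lemma pderiv_contDiffAt {n : ℕ} {f : (Fin n → ℝ) → ℝ} {x : Fin n → ℝ}
    (hf : ContDiffAt ℝ (⊤ : ℕ∞) f x) (c : Fin n) :
    ContDiffAt ℝ (⊤ : ℕ∞) (fun z => fderiv ℝ f z (Pi.single c 1)) x :=
  (hf.fderiv_right (by simp)).clm_apply contDiffAt_const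

lemma hess_symm_aux {n : ℕ} {f : (Fin n → ℝ) → ℝ} {x : Fin n → ℝ}
    (hf : ContDiffAt ℝ (⊤ : ℕ∞) f x) (i j : Fin n) :
    fderiv ℝ (fun z => fderiv ℝ f z (Pi.single j 1)) x (Pi.single i 1)
      = fderiv ℝ (fun z => fderiv ℝ f z (Pi.single i 1)) x (Pi.single j 1) := by
  have hd : DifferentiableAt ℝ (fderiv ℝ f) x :=
    (hf.fderiv_right (m := (⊤ : ℕ∞)) (by simp)).differentiableAt (by simp)
  rw [fderiv_clm_apply hd (differentiableAt_const _),
      fderiv_clm_apply hd (differentiableAt_const _)]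
  simpa using (hf.isSymmSndFDerivAt (by rw [minSmoothness_of_isRCLikeNormedField]; exact WithTop.coe_le_coe.2 (le_top : (2 : ℕ∞) ≤ ⊤))).eq (Pi.single i 1) (Pi.single j 1)

/-- the divergence of a vector field in symplectic (Legendre–dual)
coordinates.  Here `∇v : Ω → Ω'` is a diffeomorphism with inverse `w`, `u` is the
Legendre transform of `v`, and `X^a(x) = χ_a(∇v(x))`. -/
theorem statement16 (n : ℕ) (Ω Ω' : Set (Fin n → ℝ))
    (hΩopen : IsOpen Ω) (hΩ'open : IsOpen Ω')
    (v : (Fin n → ℝ) → ℝ) (hv : ContDiffOn ℝ (⊤ : ℕ∞) v Ω)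
    (hvpd : ∀ x ∈ Ω, (hessF n v x).PosDef)
    (hmaps : Set.MapsTo (gradF n v) Ω Ω')
    (w : (Fin n → ℝ) → (Fin n → ℝ)) (hw : ContDiffOn ℝ (⊤ : ℕ∞) w Ω')
    (hmaps' : Set.MapsTo w Ω' Ω)
    (hinv : ∀ x ∈ Ω, w (gradF n v x) = x)
    (hinv' : ∀ y ∈ Ω', gradF n v (w y) = y)
    (u : (Fin n → ℝ) → ℝ)
    (hu : ∀ y ∈ Ω', u y = (∑ i, w y i * y i) - v (w y))
    (χ : (Fin n → ℝ) → (Fin n → ℝ)) (hχ : ContDiffOn ℝ (⊤ : ℕ∞) χ Ω') :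
    ∀ x ∈ Ω,
      (∑ a, pderivR n a (fun z => χ (gradF n v z) a) x)
        + (∑ a, ∑ b, ∑ c, χ (gradF n v x) b * (hessF n v x)⁻¹ a c *
            pderivR n a (fun z => pderivR n b (fun z' => pderivR n c v z') z) x)
      = ∑ a, ∑ b,
          pderivR n a (fun z => (hessF n u z)⁻¹ a b * χ z b) (gradF n v x) := by
  intro x hx
  have hvAt : ∀ z ∈ Ω, ContDiffAt ℝ (⊤ : ℕ∞) v z := fun z hz => hv.contDiffAt (hΩopen.mem_nhds hz)
  have hwAt : ∀ z ∈ Ω', ContDiffAt ℝ (⊤ : ℕ∞) w z := fun z hz => hw.contDiffAt (hΩ'open.mem_nhds hz)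
  have hχAt : ∀ z ∈ Ω', ContDiffAt ℝ (⊤ : ℕ∞) χ z := fun z hz => hχ.contDiffAt (hΩ'open.mem_nhds hz)
  set y := gradF n v x with hy
  have hyΩ' : y ∈ Ω' := hmaps hx
  have hwy : w y = x := hinv x hx
  -- symmetry of the Hessian of v
  have hHsymm : ∀ z ∈ Ω, ∀ i j, hessF n v z i j = hessF n v z j i := by
    intro z hz i j
    simp only [hessF, Matrix.of_apply]
    exact hess_symm_aux (hvAt z hz) i j
  have hHT : ∀ z ∈ Ω, (hessF n v z)ᵀ = hessF n v z := by
    intro z hz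
    ext i j
    exact hHsymm z hz j i
  have hdet : ∀ z ∈ Ω, IsUnit (hessF n v z).det :=
    fun z hz => isUnit_iff_ne_zero.2 (hvpd z hz).det_pos.ne'
  have hHinvT : ∀ z ∈ Ω, ∀ i j, (hessF n v z)⁻¹ i j = (hessF n v z)⁻¹ j i := by
    intro z hz i j
    conv_lhs => rw [← hHT z hz]
    rw [← Matrix.transpose_nonsing_inv]
    rfl
  -- the Jacobian of w is the inverse Hessian of v
  have hJac : ∀ z ∈ Ω', ∀ c a, fderiv ℝ (fun z' => w z' c) z (Pi.single a 1)
      = (hessF n v (w z))⁻¹ c a := by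
    intro z hz
    have hwz : w z ∈ Ω := hmaps' hz
    have hwd : DifferentiableAt ℝ w z := (hwAt z hz).differentiableAt (by simp)
    have hprod : (hessF n v (w z))ᵀ *
        (Matrix.of fun c a => fderiv ℝ (fun z' => w z' c) z (Pi.single a 1)) = 1 := by
      ext j a
      rw [Matrix.mul_apply]
      have hcomp := pderiv_comp_eq (f := fun x' => fderiv ℝ v x' (Pi.single j 1)) (g := w)
        ((pderiv_contDiffAt (hvAt _ hwz) j).differentiableAt (by simp)) hwd a
      have heq : (fun z' => fderiv ℝ v (w z') (Pi.single j 1)) =ᶠ[nhds z]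
          (fun z' => z' j) := by
        filter_upwards [hΩ'open.mem_nhds hz] with t ht
        simpa [gradF] using congrFun (hinv' t ht) j
      have hco : fderiv ℝ (fun z' : Fin n → ℝ => z' j) z
          = ContinuousLinearMap.proj (R := ℝ) (φ := fun _ : Fin n => ℝ) j :=
        (ContinuousLinearMap.proj (R := ℝ) (φ := fun _ : Fin n => ℝ) j).fderiv
      have hfin : fderiv ℝ (fun z' => fderiv ℝ v (w z') (Pi.single j 1)) z (Pi.single a 1)
          = (Pi.single a 1 : Fin n → ℝ) j := by
        rw [heq.fderiv_eq, hco]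
        rfl
      rw [hcomp] at hfin
      calc ∑ c, (hessF n v (w z))ᵀ j c *
              Matrix.of (fun c a => fderiv ℝ (fun z' => w z' c) z (Pi.single a 1)) c a
          = ∑ c, fderiv ℝ (fun z' => w z' c) z (Pi.single a 1) *
              fderiv ℝ (fun x' => fderiv ℝ v x' (Pi.single j 1)) (w z) (Pi.single c 1) := by
            refine Finset.sum_congr rfl fun c _ => ?_
            simp only [Matrix.transpose_apply, Matrix.of_apply, hessF]
            ring
        _ = (Pi.single a 1 : Fin n → ℝ) j := hfin
        _ = (1 : Matrix (Fin n) (Fin n) ℝ) j a := by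
            simp [Pi.single_apply, Matrix.one_apply, eq_comm]
    have hDm := Matrix.inv_eq_right_inv hprod
    intro c a
    have : (Matrix.of fun c a => fderiv ℝ (fun z' => w z' c) z (Pi.single a 1)) c a
        = (hessF n v (w z))⁻¹ c a := by
      rw [← hDm, hHT _ hwz]
    simpa using this
  -- gradient of u is w
  have hgradu : ∀ z ∈ Ω', ∀ j, fderiv ℝ u z (Pi.single j 1) = w z j := by
    intro z hz j
    have hwz : w z ∈ Ω := hmaps' hz
    have hwd : DifferentiableAt ℝ w z := (hwAt z hz).differentiableAt (by simp)
    have hwdc : ∀ i, DifferentiableAt ℝ (fun z' => w z' i) z :=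
      fun i => (differentiableAt_pi.1 hwd) i
    have hproj : ∀ i : Fin n, DifferentiableAt ℝ (fun t : Fin n → ℝ => t i) z :=
      fun i => (ContinuousLinearMap.proj (R := ℝ) (φ := fun _ : Fin n => ℝ) i).differentiableAt
    have heq : u =ᶠ[nhds z] fun t => (∑ i, w t i * t i) - v (w t) := by
      filter_upwards [hΩ'open.mem_nhds hz] with t ht using hu t ht
    rw [heq.fderiv_eq]
    have hvd : DifferentiableAt ℝ (fun t => v (w t)) z :=
      ((hvAt _ hwz).differentiableAt (by simp)).comp z hwd
    have hsd : DifferentiableAt ℝ (fun t => ∑ i, w t i * t i) z :=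
      DifferentiableAt.fun_sum fun i _ => (hwdc i).mul (hproj i)
    rw [fderiv_fun_sub hsd hvd]
    simp only [ContinuousLinearMap.sub_apply]
    have hcomp := pderiv_comp_eq (f := v) (g := w)
      ((hvAt _ hwz).differentiableAt (by simp)) hwd j
    have hgv : ∀ c, fderiv ℝ v (w z) (Pi.single c 1) = z c := by
      intro c
      simpa [gradF] using congrFun (hinv' z hz) c
    have hsum : fderiv ℝ (fun t => ∑ i, w t i * t i) z (Pi.single j 1)
        = ∑ i, (w z i * (Pi.single j 1 : Fin n → ℝ) i + z i * fderiv ℝ (fun z' => w z' i) z (Pi.single j 1)) := by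
      rw [fderiv_fun_sum (fun i _ => (hwdc i).fun_mul (hproj i))]
      rw [ContinuousLinearMap.sum_apply]
      refine Finset.sum_congr rfl fun i _ => ?_
      rw [fderiv_fun_mul (hwdc i) (hproj i)]
      have : fderiv ℝ (fun t : Fin n → ℝ => t i) z
          = ContinuousLinearMap.proj (R := ℝ) (φ := fun _ : Fin n => ℝ) i :=
        (ContinuousLinearMap.proj (R := ℝ) (φ := fun _ : Fin n => ℝ) i).fderiv
      simp [this, smul_eq_mul]
    rw [hsum, hcomp]
    have : ∑ c, fderiv ℝ (fun z' => w z' c) z (Pi.single j 1) * fderiv ℝ v (w z) (Pi.single c 1)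
        = ∑ c, z c * fderiv ℝ (fun z' => w z' c) z (Pi.single j 1) := by
      refine Finset.sum_congr rfl fun c _ => ?_
      rw [hgv c]; ring
    rw [this, Finset.sum_add_distrib]
    simp [Pi.single_apply, Finset.sum_ite_eq']
  -- Hessian of u is the inverse Hessian of v
  have hhessu : ∀ z ∈ Ω', (hessF n u z)⁻¹ = hessF n v (w z) := by
    intro z hz
    have hwz : w z ∈ Ω := hmaps' hz
    have h1 : hessF n u z = (hessF n v (w z))⁻¹ := by
      ext i j
      simp only [hessF, Matrix.of_apply]
      have heq : (fun z' => fderiv ℝ u z' (Pi.single j 1)) =ᶠ[nhds z]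
          (fun z' => w z' j) := by
        filter_upwards [hΩ'open.mem_nhds hz] with t ht using hgradu t ht j
      rw [heq.fderiv_eq, hJac z hz j i]
      exact hHinvT _ hwz j i
    rw [h1, Matrix.nonsing_inv_nonsing_inv _ (hdet _ hwz)]
  -- differentiability of χ components at y
  have hχb : ∀ b, DifferentiableAt ℝ (fun z => χ z b) y := fun b =>
    (differentiableAt_pi.1 ((hχAt y hyΩ').differentiableAt (by simp))) b
  have hwd : DifferentiableAt ℝ w y := (hwAt y hyΩ').differentiableAt (by simp)
  -- abbreviations for third derivatives
  set S : Fin n → Fin n → Fin n → ℝ := fun a b c =>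
    fderiv ℝ (fun z => fderiv ℝ (fun z' => fderiv ℝ v z' (Pi.single c 1)) z (Pi.single b 1)) x
      (Pi.single a 1) with hS
  -- third derivative symmetry in the last two slots
  have hSsym : ∀ a b c, S a b c = S a c b := by
    intro a b c
    have heq : (fun z => fderiv ℝ (fun z' => fderiv ℝ v z' (Pi.single c 1)) z (Pi.single b 1))
        =ᶠ[nhds x] (fun z => fderiv ℝ (fun z' => fderiv ℝ v z' (Pi.single b 1)) z (Pi.single c 1)) := by
      filter_upwards [hΩopen.mem_nhds hx] with t ht
      simpa [hessF, Matrix.of_apply] using hHsymm t ht b c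
    simp only [hS]
    rw [heq.fderiv_eq]
  -- left-hand first term via the chain rule
  have hLHS1 : ∀ a, fderiv ℝ (fun z => χ (gradF n v z) a) x (Pi.single a 1)
      = ∑ c, hessF n v x a c * fderiv ℝ (fun z => χ z a) y (Pi.single c 1) := by
    intro a
    have hgd : DifferentiableAt ℝ (gradF n v) x :=
      ((contDiffAt_pi.2 fun i => pderiv_contDiffAt (hvAt x hx) i :
        ContDiffAt ℝ (⊤ : ℕ∞) (gradF n v) x)).differentiableAt (by simp)
    have := pderiv_comp_eq (f := fun t => χ t a) (g := gradF n v) (hχb a) hgd a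
    rw [this]
    refine Finset.sum_congr rfl fun c _ => ?_
    simp only [gradF, hessF, Matrix.of_apply]
    rfl
  -- right-hand term via the chain and product rules
  have hRHS : ∀ a b, fderiv ℝ (fun z => (hessF n u z)⁻¹ a b * χ z b) y (Pi.single a 1)
      = (∑ c, (hessF n v x)⁻¹ c a * S c a b) * χ y b
        + hessF n v x a b * fderiv ℝ (fun z => χ z b) y (Pi.single a 1) := by
    intro a b
    have heq : (fun z => (hessF n u z)⁻¹ a b * χ z b) =ᶠ[nhds y]
        (fun z => hessF n v (w z) a b * χ z b) := by
      filter_upwards [hΩ'open.mem_nhds hyΩ'] with t ht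
      rw [hhessu t ht]
    rw [heq.fderiv_eq]
    have hf2 : ContDiffAt ℝ (⊤ : ℕ∞)
        (fun x' => fderiv ℝ (fun t => fderiv ℝ v t (Pi.single b 1)) x' (Pi.single a 1)) x :=
      pderiv_contDiffAt (pderiv_contDiffAt (hvAt x hx) b) a
    have hf2wy : DifferentiableAt ℝ
        (fun x' => fderiv ℝ (fun t => fderiv ℝ v t (Pi.single b 1)) x' (Pi.single a 1)) (w y) := by
      rw [hwy]; exact hf2.differentiableAt (by simp)
    have hF : DifferentiableAt ℝ (fun z => hessF n v (w z) a b) y := by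
      simp only [hessF, Matrix.of_apply]
      exact hf2wy.comp y hwd
    have hchain := pderiv_comp_eq
      (f := fun x' => fderiv ℝ (fun t => fderiv ℝ v t (Pi.single b 1)) x' (Pi.single a 1))
      (g := w) hf2wy hwd a
    rw [fderiv_fun_mul hF (hχb b)]
    have hFval : fderiv ℝ (fun z => hessF n v (w z) a b) y (Pi.single a 1)
        = ∑ c, (hessF n v x)⁻¹ c a * S c a b := by
      simp only [hessF, Matrix.of_apply]
      rw [hchain]
      refine Finset.sum_congr rfl fun c _ => ?_
      rw [hJac y hyΩ' c a, hwy]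
      simp only [hS]
      rfl
    have hFy : hessF n v (w y) a b = hessF n v x a b := by rw [hwy]
    simp only [ContinuousLinearMap.add_apply, ContinuousLinearMap.smul_apply, smul_eq_mul]
    rw [hFval, hFy]
    ring
  -- now assemble everything
  simp only [pderivR]
  rw [Finset.sum_congr rfl fun a _ => hLHS1 a,
      Finset.sum_congr rfl fun a (_ : a ∈ Finset.univ) =>
        Finset.sum_congr rfl fun b (_ : b ∈ Finset.univ) => hRHS a b]
  have hsplit : ∑ a, ∑ b, ((∑ c, (hessF n v x)⁻¹ c a * S c a b) * χ y b
        + hessF n v x a b * fderiv ℝ (fun z => χ z b) y (Pi.single a 1))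
      = (∑ a, ∑ b, (∑ c, (hessF n v x)⁻¹ c a * S c a b) * χ y b)
        + ∑ a, ∑ b, hessF n v x a b * fderiv ℝ (fun z => χ z b) y (Pi.single a 1) := by
    rw [← Finset.sum_add_distrib]
    exact Finset.sum_congr rfl fun a _ => Finset.sum_add_distrib
  rw [hsplit]
  have h2 : ∑ a, ∑ c, hessF n v x a c * fderiv ℝ (fun z => χ z a) y (Pi.single c 1)
      = ∑ a, ∑ b, hessF n v x a b * fderiv ℝ (fun z => χ z b) y (Pi.single a 1) := by
    rw [Finset.sum_comm]
    exact Finset.sum_congr rfl fun a _ => Finset.sum_congr rfl fun b _ => by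
      rw [hHsymm x hx a b]
  have h3 : ∑ a, ∑ b, ∑ c, χ y b * (hessF n v x)⁻¹ a c *
        fderiv ℝ (fun z => fderiv ℝ (fun z' => fderiv ℝ v z' (Pi.single c 1)) z (Pi.single b 1)) x
          (Pi.single a 1)
      = ∑ a, ∑ b, (∑ c, (hessF n v x)⁻¹ c a * S c a b) * χ y b := by
    have key : ∀ b, ∑ a, ∑ c, χ y b * (hessF n v x)⁻¹ a c * S a b c
        = ∑ a, (∑ c, (hessF n v x)⁻¹ c a * S c a b) * χ y b := by
      intro b
      have step1 : ∑ a, ∑ c, χ y b * (hessF n v x)⁻¹ a c * S a b c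
          = ∑ a, ∑ c, (hessF n v x)⁻¹ a c * S a c b * χ y b := by
        refine Finset.sum_congr rfl fun a _ => Finset.sum_congr rfl fun c _ => ?_
        rw [hSsym a b c]; ring
      rw [step1, Finset.sum_comm]
      exact Finset.sum_congr rfl fun a _ => (Finset.sum_mul _ _ _).symm
    calc ∑ a, ∑ b, ∑ c, χ y b * (hessF n v x)⁻¹ a c * S a b c
        = ∑ b, ∑ a, ∑ c, χ y b * (hessF n v x)⁻¹ a c * S a b c := Finset.sum_comm
      _ = ∑ b, ∑ a, (∑ c, (hessF n v x)⁻¹ c a * S c a b) * χ y b :=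
          Finset.sum_congr rfl fun b _ => key b
      _ = ∑ a, ∑ b, (∑ c, (hessF n v x)⁻¹ c a * S c a b) * χ y b := Finset.sum_comm
  rw [Finset.sum_congr rfl fun a _ => Finset.sum_congr rfl fun c _ => rfl] at h2 ⊢
  rw [h3, ← h2, add_comm]
end
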